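/- arXiv:2405.20116 — 7 statements merged into one kernel-verified Lean document; each statement's English description precedes it below -/
import Mathlib

section
/- Let X and Y be square-integrable real random variables on a probability space with positive variances, let σ_X = √Var(X), σ_Y = √Var(Y), and let ρ = Cov(X,Y)/(σ_X σ_Y) denote their correlation. Suppose there exist constants δ ≥ 0, L_σ > 0, L_ρ > 0 and α ≥ 1 such that |Var(X) − Var(Y)| ≤ L_σ·δ, 0 ≤ ρ ≤ 1, and 1 − ρ ≤ L_ρ·δ^α. Then Var(X − Y) ≤ 2·Var(Y)·L_ρ·δ^α + 3·L_σ·δ. -/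
/-!
Writing `σ_X, σ_Y` for the standard deviations and `ε = L_σ δ`,
`Var(X - Y) = (σ_X - σ_Y)² + 2 σ_X σ_Y (1 - ρ)`. The first term is at most
`|σ_X² - σ_Y²| ≤ ε`, and since `2 σ_X σ_Y ≤ σ_X² + σ_Y² ≤ 2 σ_Y² + ε` and `0 ≤ 1 - ρ ≤ 1`,
the second is at most `2 σ_Y² (1 - ρ) + ε ≤ 2 σ_Y² L_ρ δ^α + ε`.
-/

open MeasureTheory ProbabilityTheory

namespace ProbabilityTheory

variable {Ω : Type*} {m0 : MeasurableSpace Ω} {P : Measure Ω} [IsFiniteMeasure P] {X Y : Ω → ℝ}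

lemma covariance_sq_le_variance_mul_variance (hX : MemLp X 2 P) (hY : MemLp Y 2 P) :
    cov[X, Y; P] ^ 2 ≤ Var[X; P] * Var[Y; P] := by
  -- the quadratic `t ↦ Var[t • X + Y]` is nonnegative, so its discriminant is not positive
  have hquad : ∀ t : ℝ, 0 ≤ Var[X; P] * (t * t) + 2 * cov[X, Y; P] * t + Var[Y; P] := by
    intro t
    have := variance_nonneg (t • X + Y) P
    rw [variance_add (hX.const_smul t) hY, variance_smul, covariance_smul_left] at this
    convert this using 1
    ring
  have := discrim_le_zero hquad
  rw [discrim] at this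
  linarith

/-- When a standard deviation vanishes the quotient is `0` by convention, but then so is the
covariance, by Cauchy–Schwarz. -/
lemma covariance_eq_correlation_mul_sqrt (hX : MemLp X 2 P) (hY : MemLp Y 2 P) :
    cov[X, Y; P] = cov[X, Y; P] / (√Var[X; P] * √Var[Y; P]) * (√Var[X; P] * √Var[Y; P]) := by
  by_cases hσ : √Var[X; P] * √Var[Y; P] = 0
  · have hvar : Var[X; P] * Var[Y; P] = 0 := by
      rwa [← Real.sqrt_mul (variance_nonneg X P),
        Real.sqrt_eq_zero (mul_nonneg (variance_nonneg X P) (variance_nonneg Y P))] at hσ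
    have hcov : cov[X, Y; P] = 0 := by
      have := covariance_sq_le_variance_mul_variance hX hY
      rw [hvar] at this
      exact pow_eq_zero_iff two_ne_zero |>.mp (le_antisymm this (sq_nonneg _))
    simp [hcov]
  · exact (div_mul_cancel₀ _ hσ).symm

lemma variance_sub_eq_sq_add_correlation (hX : MemLp X 2 P) (hY : MemLp Y 2 P) :
    Var[X - Y; P] = (√Var[X; P] - √Var[Y; P]) ^ 2
      + 2 * (√Var[X; P] * √Var[Y; P]) * (1 - cov[X, Y; P] / (√Var[X; P] * √Var[Y; P])) := by
  rw [variance_sub hX hY]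
  nth_rw 1 [covariance_eq_correlation_mul_sqrt hX hY]
  have hsX := Real.sq_sqrt (variance_nonneg X P)
  have hsY := Real.sq_sqrt (variance_nonneg Y P)
  linear_combination -hsX - hsY

end ProbabilityTheory

lemma sq_sub_le_abs_sq_sub_sq {a b : ℝ} (ha : 0 ≤ a) (hb : 0 ≤ b) :
    (a - b) ^ 2 ≤ |a ^ 2 - b ^ 2| := by
  rw [show a ^ 2 - b ^ 2 = (a - b) * (a + b) by ring, abs_mul, sq, ← abs_mul_abs_self]
  refine mul_le_mul_of_nonneg_left ?_ (abs_nonneg _)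
  rw [abs_of_nonneg (add_nonneg ha hb)]
  exact abs_le.mpr ⟨by linarith, by linarith⟩

lemma sq_sub_add_mul_one_sub_le {a b ρ ε η : ℝ} (ha : 0 ≤ a) (hb : 0 ≤ b)
    (hab : |a ^ 2 - b ^ 2| ≤ ε) (hρ0 : 0 ≤ ρ) (hρ1 : ρ ≤ 1) (hρη : 1 - ρ ≤ η) :
    (a - b) ^ 2 + 2 * (a * b) * (1 - ρ) ≤ 2 * b ^ 2 * η + 2 * ε := by
  have hsq : (a - b) ^ 2 ≤ ε := (sq_sub_le_abs_sq_sub_sq ha hb).trans hab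
  have hmul : 2 * (a * b) ≤ 2 * b ^ 2 + ε := by
    nlinarith [sq_nonneg (a - b), (abs_le.mp hab).2]
  have hε : 0 ≤ ε := (abs_nonneg _).trans hab
  calc (a - b) ^ 2 + 2 * (a * b) * (1 - ρ)
      ≤ ε + (2 * b ^ 2 + ε) * (1 - ρ) := by gcongr
    _ = ε + (2 * b ^ 2 * (1 - ρ) + ε * (1 - ρ)) := by ring
    _ ≤ ε + (2 * b ^ 2 * η + ε * 1) := by gcongr; linarith
    _ = 2 * b ^ 2 * η + 2 * ε := by ring

theorem stmt_1_general
    {Ω : Type*} {m0 : MeasurableSpace Ω} (P : Measure Ω) [IsProbabilityMeasure P]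
    (X Y : Ω → ℝ) (hX : MemLp X 2 P) (hY : MemLp Y 2 P)
    (δ Lσ Lρ α : ℝ)
    (ρ : ℝ)
    (hρdef : ρ = (∫ ω, (X ω - ∫ x, X x ∂P) * (Y ω - ∫ x, Y x ∂P) ∂P)
        / (Real.sqrt (variance X P) * Real.sqrt (variance Y P)))
    (hvar : |variance X P - variance Y P| ≤ Lσ * δ)
    (hρ0 : 0 ≤ ρ) (hρ1 : ρ ≤ 1) (hρH : 1 - ρ ≤ Lρ * δ ^ α) :
    variance (X - Y) P ≤ 2 * variance Y P * Lρ * δ ^ α + 3 * Lσ * δ := by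
  have hρcov : ρ = cov[X, Y; P] / (√Var[X; P] * √Var[Y; P]) := hρdef
  have hsY := Real.sq_sqrt (variance_nonneg Y P)
  have hsd : |√Var[X; P] ^ 2 - √Var[Y; P] ^ 2| ≤ Lσ * δ := by
    rwa [Real.sq_sqrt (variance_nonneg X P), hsY]
  have hbound := sq_sub_add_mul_one_sub_le (Real.sqrt_nonneg _) (Real.sqrt_nonneg _) hsd
    hρ0 hρ1 hρH
  rw [hsY] at hbound
  have hLσδ : 0 ≤ Lσ * δ := (abs_nonneg _).trans hvar
  rw [variance_sub_eq_sq_add_correlation hX hY, ← hρcov]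
  linarith

/-- **CRN variance bound for a function difference (non-Lipschitz paths).**
If `X`, `Y` are square-integrable with positive variances, `ρ` is their
correlation, the variances differ by at most `L_σ δ`, `0 ≤ ρ ≤ 1`, and
`1 − ρ ≤ L_ρ δ^α`, then `Var(X − Y) ≤ 2 Var(Y) L_ρ δ^α + 3 L_σ δ`. -/
theorem stmt_1
    {Ω : Type*} {m0 : MeasurableSpace Ω} (P : Measure Ω) [IsProbabilityMeasure P]
    (X Y : Ω → ℝ) (hX : MemLp X 2 P) (hY : MemLp Y 2 P)
    (hvX : 0 < variance X P) (hvY : 0 < variance Y P)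
    (δ Lσ Lρ α : ℝ) (hδ : 0 ≤ δ) (hLσ : 0 < Lσ) (hLρ : 0 < Lρ) (hα : 1 ≤ α)
    (ρ : ℝ)
    (hρdef : ρ = (∫ ω, (X ω - ∫ x, X x ∂P) * (Y ω - ∫ x, Y x ∂P) ∂P)
        / (Real.sqrt (variance X P) * Real.sqrt (variance Y P)))
    (hvar : |variance X P - variance Y P| ≤ Lσ * δ)
    (hρ0 : 0 ≤ ρ) (hρ1 : ρ ≤ 1) (hρH : 1 - ρ ≤ Lρ * δ ^ α) :
    variance (X - Y) P ≤ 2 * variance Y P * Lρ * δ ^ α + 3 * Lσ * δ :=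
  stmt_1_general (m0 := m0) P X Y hX hY δ Lσ Lρ α ρ hρdef hvar hρ0 hρ1 hρH
end

section
/- Let (Ω, F, P) be a probability space, G ⊆ F a sub-σ-algebra, and X, Y real random variables such that for every integer m ≥ 2, E[|X|^m | G] ≤ (m!/2)·b^{m−2}·σ² and E[|Y|^m | G] ≤ (m!/2)·b^{m−2}·σ² almost surely, where b > 0 and σ² > 0. Suppose in addition that there exist Δ > 0 and σ_B² ≥ 4σ² with E[(X − Y)² | G] ≤ Δ·σ_B² almost surely. Then for every integer m ≥ 2, E[|X − Y|^m | G] ≤ (m!/2) · ( max{2b/Δ, 2b} )^{m−2} · Δ·σ_B² almost surely. -/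
/-!
For `m = 2` the claim is the conditional variance bound. For `m ≥ 3`, the convexity bound
`|x - y|ᵐ ≤ 2ᵐ⁻¹ (|x|ᵐ + |y|ᵐ)` and the moment conditions on `X` and `Y` give
`E[|X - Y|ᵐ | G] ≤ (m!/2) (2b)ᵐ⁻² · 4σ²`, and `(2b)ᵐ⁻² ≤ Δ · max (2b/Δ) (2b) ^ (m - 2)`:
for `Δ ≥ 1` trivially, and for `Δ < 1` because `(2b)ᵐ⁻² = (2b/Δ)ᵐ⁻² Δᵐ⁻²` and `Δᵐ⁻² ≤ Δ`.
-/

open MeasureTheory ProbabilityTheory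

lemma pow_le_mul_max_div_pow {a Δ : ℝ} (ha : 0 ≤ a) (hΔ : 0 < Δ) {k : ℕ} (hk : k ≠ 0) :
    a ^ k ≤ Δ * max (a / Δ) a ^ k := by
  rcases le_or_gt 1 Δ with hΔ1 | hΔ1
  · calc a ^ k ≤ max (a / Δ) a ^ k := pow_le_pow_left₀ ha (le_max_right _ _) k
      _ ≤ Δ * max (a / Δ) a ^ k :=
        le_mul_of_one_le_left (pow_nonneg (ha.trans (le_max_right _ _)) k) hΔ1
  · calc a ^ k = (a / Δ) ^ k * Δ ^ k := by rw [← mul_pow, div_mul_cancel₀ a hΔ.ne']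
      _ ≤ max (a / Δ) a ^ k * Δ := by
        gcongr
        · exact le_max_left _ _
        · exact pow_le_of_le_one hΔ.le hΔ1.le hk
      _ = Δ * max (a / Δ) a ^ k := mul_comm _ _

lemma abs_sub_pow_le (x y : ℝ) (m : ℕ) : |x - y| ^ m ≤ 2 ^ (m - 1) * (|x| ^ m + |y| ^ m) :=
  (pow_le_pow_left₀ (abs_nonneg _) (abs_sub _ _) m).trans
    (add_pow_le (abs_nonneg _) (abs_nonneg _) m)

section CondExp

variable {Ω : Type*} {m m0 : MeasurableSpace Ω} {μ : Measure Ω}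

/-- No integrability of `f` is required: `X` and `Y` are not assumed measurable, so neither is
`|X - Y| ^ m`. -/
lemma condExp_mono_of_nonneg {f g : Ω → ℝ} (hf : 0 ≤ᵐ[μ] f) (hg : Integrable g μ)
    (hfg : f ≤ᵐ[μ] g) : μ[f | m] ≤ᵐ[μ] μ[g | m] := by
  by_cases hfi : Integrable f μ
  · exact condExp_mono hfi hg hfg
  · rw [condExp_of_not_integrable hfi]
    exact condExp_nonneg (hf.trans hfg)

lemma condExp_abs_sub_pow_le {X Y : Ω → ℝ} {n : ℕ} (hX : Integrable (fun ω => |X ω| ^ n) μ)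
    (hY : Integrable (fun ω => |Y ω| ^ n) μ) :
    ∀ᵐ ω ∂μ, μ[fun ω' => |X ω' - Y ω'| ^ n | m] ω
      ≤ 2 ^ (n - 1) * (μ[fun ω' => |X ω'| ^ n | m] ω + μ[fun ω' => |Y ω'| ^ n | m] ω) := by
  have hle := condExp_mono_of_nonneg (m := m) (ae_of_all μ fun ω => by positivity)
    ((hX.add hY).smul ((2 : ℝ) ^ (n - 1))) (ae_of_all μ fun ω => abs_sub_pow_le (X ω) (Y ω) n)
  filter_upwards [hle, condExp_smul (m := m) ((2 : ℝ) ^ (n - 1))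
    ((fun ω => |X ω| ^ n) + fun ω => |Y ω| ^ n), condExp_add hX hY m] with ω hle hsmul hadd
  rwa [hsmul, Pi.smul_apply, smul_eq_mul, hadd] at hle

end CondExp

theorem stmt_4_general
    {Ω : Type*} {m0 : MeasurableSpace Ω} (P : Measure Ω)
    (G : MeasurableSpace Ω)
    (X Y : Ω → ℝ) (b σ : ℝ) (hb : 0 < b)
    (hXint : ∀ m : ℕ, 2 ≤ m → Integrable (fun ω => |X ω| ^ m) P)
    (hYint : ∀ m : ℕ, 2 ≤ m → Integrable (fun ω => |Y ω| ^ m) P)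
    (hXmom : ∀ m : ℕ, 2 ≤ m → ∀ᵐ ω ∂P, (P[fun ω' => |X ω'| ^ m | G]) ω
      ≤ (m.factorial : ℝ) / 2 * b ^ (m - 2) * σ ^ 2)
    (hYmom : ∀ m : ℕ, 2 ≤ m → ∀ᵐ ω ∂P, (P[fun ω' => |Y ω'| ^ m | G]) ω
      ≤ (m.factorial : ℝ) / 2 * b ^ (m - 2) * σ ^ 2)
    (Δ σB2 : ℝ) (hΔ : 0 < Δ) (hσB : 4 * σ ^ 2 ≤ σB2)
    (hcondvar : ∀ᵐ ω ∂P, (P[fun ω' => (X ω' - Y ω') ^ 2 | G]) ω ≤ Δ * σB2) :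
    ∀ m : ℕ, 2 ≤ m → ∀ᵐ ω ∂P, (P[fun ω' => |X ω' - Y ω'| ^ m | G]) ω
      ≤ (m.factorial : ℝ) / 2 * max (2 * b / Δ) (2 * b) ^ (m - 2) * (Δ * σB2) := by
  intro m hm
  rcases hm.eq_or_lt with rfl | hm3
  · simpa [sq_abs] using hcondvar
  have hkey := pow_le_mul_max_div_pow (by positivity : 0 ≤ 2 * b) hΔ (k := m - 2) (by omega)
  filter_upwards [condExp_abs_sub_pow_le (m := G) (hXint m hm) (hYint m hm), hXmom m hm,
    hYmom m hm] with ω hdiff hx hy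
  have h2pow : (2 : ℝ) ^ (m - 1) = 2 * 2 ^ (m - 2) := by
    rw [← pow_succ']; congr 1; omega
  calc _ ≤ _ := hdiff
    _ ≤ 2 ^ (m - 1) * (2 * ((m.factorial : ℝ) / 2 * b ^ (m - 2) * σ ^ 2)) := by gcongr; linarith
    _ = (m.factorial : ℝ) / 2 * (2 * b) ^ (m - 2) * (4 * σ ^ 2) := by rw [h2pow, mul_pow]; ring
    _ ≤ (m.factorial : ℝ) / 2 * (Δ * max (2 * b / Δ) (2 * b) ^ (m - 2)) * σB2 := by
      gcongr
    _ = _ := by ring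

/-- **Conditional Bernstein moments of a CRN difference.** If `X` and `Y`
each satisfy the conditional Bernstein moment condition with parameters
`(b, σ²)` given `G`, and the conditional variance of `X − Y` is at most
`Δ σ_B²` with `σ_B² ≥ 4σ²`, then `X − Y` satisfies the conditional Bernstein
moment condition with parameters `(max{2b/Δ, 2b}, Δ σ_B²)`. -/
theorem stmt_4
    {Ω : Type*} {m0 : MeasurableSpace Ω} (P : Measure Ω) [IsProbabilityMeasure P]
    (G : MeasurableSpace Ω) (hG : G ≤ m0)
    (X Y : Ω → ℝ) (b σ : ℝ) (hb : 0 < b) (hσ : 0 < σ ^ 2)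
    (hXint : ∀ m : ℕ, 2 ≤ m → Integrable (fun ω => |X ω| ^ m) P)
    (hYint : ∀ m : ℕ, 2 ≤ m → Integrable (fun ω => |Y ω| ^ m) P)
    (hXmom : ∀ m : ℕ, 2 ≤ m → ∀ᵐ ω ∂P, (P[fun ω' => |X ω'| ^ m | G]) ω
      ≤ (m.factorial : ℝ) / 2 * b ^ (m - 2) * σ ^ 2)
    (hYmom : ∀ m : ℕ, 2 ≤ m → ∀ᵐ ω ∂P, (P[fun ω' => |Y ω'| ^ m | G]) ω
      ≤ (m.factorial : ℝ) / 2 * b ^ (m - 2) * σ ^ 2)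
    (Δ σB2 : ℝ) (hΔ : 0 < Δ) (hσB : 4 * σ ^ 2 ≤ σB2)
    (hcondvar : ∀ᵐ ω ∂P, (P[fun ω' => (X ω' - Y ω') ^ 2 | G]) ω ≤ Δ * σB2) :
    ∀ m : ℕ, 2 ≤ m → ∀ᵐ ω ∂P, (P[fun ω' => |X ω' - Y ω'| ^ m | G]) ω
      ≤ (m.factorial : ℝ) / 2 * max (2 * b / Δ) (2 * b) ^ (m - 2) * (Δ * σB2) :=
  stmt_4_general (m0 := m0) P G X Y b σ hb hXint hYint hXmom hYmom Δ σB2 hΔ hσB hcondvar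
end

section
/- Let (Ω, F, P) be a probability space with a filtration F_0 ⊆ F_1 ⊆ … where F_0 is trivial, and let Δ > 0, κ_{Lm} > 0, κ_{Lg} > 0. For j ≥ 1 let Z_j be an F_j-measurable real random variable such that |Z_j| ≤ K_j·Δ almost surely, where K_j ≥ 0 satisfies (E[K_j^m | F_{j−1}])^{1/m} ≤ κ_{Lm} almost surely for every integer m ≥ 2, and suppose the conditional mean μ_j = E[Z_j | F_{j−1}] satisfies |μ_j| ≤ κ_{Lg}·Δ almost surely. Set D_j = Z_j − μ_j. Then for every c > 0 and every n ∈ ℕ, P( Σ_{j=1}^n D_j ≥ n·c ) ≤ exp( − n·c² / (2(Δ·b_C·c + Δ²·σ_C²)) ), where b_C = σ_C = κ_{Lg} + κ_{Lm}. -/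
/-!
Conditionally on `𝓕 (j - 1)` the increment `D j = Z j - 𝔼[Z j | 𝓕 (j - 1)]` is centred and
`|D j| ≤ (K j + κLg) Δ`. By convexity of `x ↦ x ^ k`, the conditional `k`-th moments of
`K j + κLg` are at most `(κLm + κLg) ^ k`, so with `B = (κLm + κLg) Δ` and `t = λ B < 1`,
Bernstein's series bound `eˣ ≤ 1 + x + ∑_{k ≥ 2} |x|ᵏ / k!` gives
`𝔼[exp (λ D j) | 𝓕 (j - 1)] ≤ eᵗ - t ≤ exp (t² / (2 (1 - t)))`.
Multiplying these bounds along the filtration controls `𝔼[exp (λ ∑ D j)]`, and Chernoff's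
inequality with `λ = c / (B c + B²)` gives the claim.

Conditional bounds are expressed as inequalities between Lebesgue integrals over
`𝓕 (j - 1)`-measurable sets, so that no integrability of `exp (λ ∑ D j)` is needed.
-/

open MeasureTheory ProbabilityTheory
open scoped ENNReal
open ENNReal (ofReal)

namespace Real

theorem hasSum_exp_sub_one_sub (x : ℝ) :
    HasSum (fun n : ℕ => x ^ (n + 2) / (n + 2).factorial) (exp x - 1 - x) := by
  have h := (hasSum_nat_add_iff' 2).2 (exp_eq_exp_ℝ ▸ NormedSpace.expSeries_div_hasSum_exp x)
  simpa [Finset.sum_range_succ, sub_add_eq_sub_sub] using h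

theorem exp_sub_one_sub_le_of_abs_le {x y : ℝ} (h : |x| ≤ y) :
    exp x - 1 - x ≤ exp y - 1 - y := by
  refine hasSum_le (fun n => ?_) (hasSum_exp_sub_one_sub x) (hasSum_exp_sub_one_sub y)
  refine div_le_div_of_nonneg_right ?_ (Nat.cast_nonneg _)
  calc x ^ (n + 2) ≤ |x| ^ (n + 2) := (le_abs_self _).trans_eq (abs_pow x _)
    _ ≤ y ^ (n + 2) := pow_le_pow_left₀ (abs_nonneg x) h _

theorem exp_sub_one_sub_le_sq_div {t : ℝ} (h0 : 0 ≤ t) (h1 : t < 1) :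
    exp t - 1 - t ≤ t ^ 2 / (2 * (1 - t)) := by
  have hgeom := (hasSum_geometric_of_lt_one h0 h1).mul_left (t ^ 2 / 2)
  rw [← div_eq_mul_inv, div_div] at hgeom
  refine hasSum_le (fun n => ?_) (hasSum_exp_sub_one_sub t) hgeom
  have hfac : (2 : ℝ) ≤ (n + 2).factorial := by
    exact_mod_cast (Nat.self_le_factorial _).trans' (by omega)
  calc t ^ (n + 2) / (n + 2).factorial ≤ t ^ (n + 2) / 2 := by gcongr
    _ = t ^ 2 / 2 * t ^ n := by ring

end Real

theorem add_pow_le_mul_pow_add {x a κ : ℝ} (hx : 0 ≤ x) (ha : 0 ≤ a) (hκ : 0 < κ) (k : ℕ) :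
    (x + a) ^ k ≤ κ / (κ + a) * ((κ + a) / κ) ^ k * x ^ k + a / (κ + a) * (κ + a) ^ k := by
  have hr : 0 < κ + a := by positivity
  have h := (convexOn_pow k).2 (Set.mem_Ici.2 (by positivity : 0 ≤ (κ + a) / κ * x))
    (Set.mem_Ici.2 hr.le) (by positivity : 0 ≤ κ / (κ + a)) (by positivity : 0 ≤ a / (κ + a))
    (by field_simp)
  have hmid : κ / (κ + a) * ((κ + a) / κ * x) + a / (κ + a) * (κ + a) = x + a := by
    field_simp
  simp only [smul_eq_mul, hmid, mul_pow] at h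
  simpa only [mul_assoc] using h

theorem exp_neg_mul_mul_exp_sub_pow_le {B c : ℝ} (hB : 0 < B) (hc : 0 < c) (n : ℕ) :
    Real.exp (-(c / (B * c + B ^ 2) * (n * c))) *
        (Real.exp (c / (B * c + B ^ 2) * B) - c / (B * c + B ^ 2) * B) ^ n
      ≤ Real.exp (-(n * c ^ 2 / (2 * (B * c + B ^ 2)))) := by
  set t := c / (B * c + B ^ 2) * B
  have ht : t = c / (c + B) := by simp only [t]; field_simp
  have ht0 : 0 ≤ t := by rw [ht]; positivity
  have ht1 : t < 1 := by rw [ht, div_lt_one (by positivity)]; linarith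
  have hmgf : Real.exp t - t ≤ Real.exp (t ^ 2 / (2 * (1 - t))) := by
    linarith [Real.exp_sub_one_sub_le_sq_div ht0 ht1, Real.add_one_le_exp (t ^ 2 / (2 * (1 - t)))]
  have hmgf0 : 0 ≤ Real.exp t - t := by linarith [Real.add_one_le_exp t]
  calc Real.exp (-(c / (B * c + B ^ 2) * (n * c))) * (Real.exp t - t) ^ n
      ≤ Real.exp (-(c / (B * c + B ^ 2) * (n * c))) * Real.exp (t ^ 2 / (2 * (1 - t))) ^ n := by
        gcongr
    _ = Real.exp (-(n * c ^ 2 / (2 * (B * c + B ^ 2)))) := by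
        rw [← Real.exp_nat_mul, ← Real.exp_add, ht]
        congr 1
        have h1t : 1 - c / (c + B) = B / (c + B) := by field_simp; ring
        rw [h1t]
        field_simp
        ring

section

variable {Ω : Type*} {m0 : MeasurableSpace Ω} {μ : Measure Ω}

theorem lintegral_exp_sub_one_sub_le {Y : Ω → ℝ} (hY : AEMeasurable Y μ)
    (hY0 : ∀ᵐ ω ∂μ, 0 ≤ Y ω) {t : ℝ} (ht : 0 ≤ t) {c : ℝ≥0∞}
    (hmom : ∀ n : ℕ, ∫⁻ ω, ofReal (Y ω ^ (n + 2)) ∂μ ≤ ofReal (t ^ (n + 2)) * c) :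
    ∫⁻ ω, ofReal (Real.exp (Y ω) - 1 - Y ω) ∂μ ≤ ofReal (Real.exp t - 1 - t) * c := by
  set w : ℕ → ℝ≥0∞ := fun n => ofReal ((n + 2).factorial : ℝ)⁻¹
  have htsum : ∀ y : ℝ, 0 ≤ y →
      ofReal (Real.exp y - 1 - y) = ∑' n : ℕ, w n * ofReal (y ^ (n + 2)) := fun y hy => by
    rw [← (Real.hasSum_exp_sub_one_sub y).tsum_eq, ENNReal.ofReal_tsum_of_nonneg
      (fun n => by positivity) (Real.hasSum_exp_sub_one_sub y).summable]
    simp only [w, ← ENNReal.ofReal_mul (inv_nonneg.2 (Nat.cast_nonneg _)), inv_mul_eq_div]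
  calc ∫⁻ ω, ofReal (Real.exp (Y ω) - 1 - Y ω) ∂μ
      = ∫⁻ ω, ∑' n : ℕ, w n * ofReal (Y ω ^ (n + 2)) ∂μ :=
        lintegral_congr_ae (hY0.mono fun ω hω => htsum _ hω)
    _ = ∑' n : ℕ, w n * ∫⁻ ω, ofReal (Y ω ^ (n + 2)) ∂μ := by
        rw [lintegral_tsum fun n => ((hY.pow_const _).ennreal_ofReal).const_mul _]
        simp only [w, lintegral_const_mul' _ _ ENNReal.ofReal_ne_top]
    _ ≤ ∑' n : ℕ, w n * (ofReal (t ^ (n + 2)) * c) := by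
        gcongr with n
        exact hmom n
    _ = ofReal (Real.exp t - 1 - t) * c := by
        simp only [htsum t ht, ← ENNReal.tsum_mul_right, mul_assoc]

theorem lintegral_add_const_pow_le {K : Ω → ℝ} (hK0 : ∀ᵐ ω ∂μ, 0 ≤ K ω) {κ a : ℝ}
    (hκ : 0 < κ) (ha : 0 ≤ a) {k : ℕ}
    (hmom : ∫⁻ ω, ofReal (K ω ^ k) ∂μ ≤ ofReal (κ ^ k) * μ Set.univ) :
    ∫⁻ ω, ofReal ((K ω + a) ^ k) ∂μ ≤ ofReal ((κ + a) ^ k) * μ Set.univ := by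
  have hr : 0 < κ + a := by positivity
  set A := κ / (κ + a) * ((κ + a) / κ) ^ k
  set B := a / (κ + a) * (κ + a) ^ k
  have hAB : A * κ ^ k + B = (κ + a) ^ k := by
    simp only [A, B]
    rw [div_pow, mul_assoc, div_mul_cancel₀ _ (by positivity), ← add_mul, ← add_div,
      div_self hr.ne', one_mul]
  calc ∫⁻ ω, ofReal ((K ω + a) ^ k) ∂μ
      ≤ ∫⁻ ω, ofReal A * ofReal (K ω ^ k) + ofReal B ∂μ := by
        refine lintegral_mono_ae ?_
        filter_upwards [hK0] with ω hω
        rw [← ENNReal.ofReal_mul (by positivity),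
          ← ENNReal.ofReal_add (by positivity) (by positivity)]
        exact ENNReal.ofReal_le_ofReal (add_pow_le_mul_pow_add hω ha hκ k)
    _ = ofReal A * ∫⁻ ω, ofReal (K ω ^ k) ∂μ + ofReal B * μ Set.univ := by
        rw [lintegral_add_right _ measurable_const, lintegral_const_mul' _ _ ENNReal.ofReal_ne_top,
          lintegral_const]
    _ ≤ ofReal A * (ofReal (κ ^ k) * μ Set.univ) + ofReal B * μ Set.univ := by
        gcongr
    _ = ofReal ((κ + a) ^ k) * μ Set.univ := by
        rw [← mul_assoc, ← add_mul, ← ENNReal.ofReal_mul (by positivity),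
          ← ENNReal.ofReal_add (by positivity) (by positivity), hAB]

theorem lintegral_exp_le_of_abs_le [IsFiniteMeasure μ] {X Y : Ω → ℝ} (hX : Integrable X μ)
    (hX0 : ∫ ω, X ω ∂μ = 0) (hY : AEMeasurable Y μ) (hXY : ∀ᵐ ω ∂μ, |X ω| ≤ Y ω) {t : ℝ}
    (ht : 0 ≤ t)
    (hmom : ∀ n : ℕ, ∫⁻ ω, ofReal (Y ω ^ (n + 2)) ∂μ ≤ ofReal (t ^ (n + 2)) * μ Set.univ) :
    ∫⁻ ω, ofReal (Real.exp (X ω)) ∂μ ≤ ofReal (Real.exp t - t) * μ Set.univ := by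
  have hφ0 : ∀ y, 0 ≤ Real.exp y - 1 - y := fun y => by linarith [Real.add_one_le_exp y]
  have hY0 : ∀ᵐ ω ∂μ, 0 ≤ Y ω := hXY.mono fun ω h => (abs_nonneg _).trans h
  have hφY := lintegral_exp_sub_one_sub_le hY hY0 ht hmom
  have hφY_int : Integrable (fun ω => Real.exp (Y ω) - 1 - Y ω) μ := by
    refine ⟨(by fun_prop : AEMeasurable (fun ω => Real.exp (Y ω) - 1 - Y ω) μ)
      |>.aestronglyMeasurable, (hasFiniteIntegral_iff_ofReal (.of_forall fun ω => hφ0 _)).2 ?_⟩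
    exact hφY.trans_lt (ENNReal.mul_lt_top ENNReal.ofReal_lt_top (measure_lt_top _ _))
  have h1X_int : Integrable (fun ω => 1 + X ω) μ := (integrable_const 1).add hX
  have hG_int : Integrable (fun ω => (1 + X ω) + (Real.exp (Y ω) - 1 - Y ω)) μ :=
    h1X_int.add hφY_int
  have hexp_le : ∀ᵐ ω ∂μ, Real.exp (X ω) ≤ (1 + X ω) + (Real.exp (Y ω) - 1 - Y ω) := by
    filter_upwards [hXY] with ω h
    linarith [Real.exp_sub_one_sub_le_of_abs_le h]
  calc ∫⁻ ω, ofReal (Real.exp (X ω)) ∂μ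
      ≤ ∫⁻ ω, ofReal ((1 + X ω) + (Real.exp (Y ω) - 1 - Y ω)) ∂μ :=
        lintegral_mono_ae (hexp_le.mono fun ω h => ENNReal.ofReal_le_ofReal h)
    _ = ofReal (μ.real Set.univ + ∫ ω, (Real.exp (Y ω) - 1 - Y ω) ∂μ) := by
        rw [← ofReal_integral_eq_lintegral_ofReal hG_int
          (hexp_le.mono fun ω h => (Real.exp_pos _).le.trans h),
          integral_add h1X_int hφY_int, integral_add (integrable_const 1) hX, hX0,
          integral_const, smul_eq_mul, mul_one, add_zero]
    _ ≤ μ Set.univ + ∫⁻ ω, ofReal (Real.exp (Y ω) - 1 - Y ω) ∂μ := by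
        refine ENNReal.ofReal_add_le.trans_eq ?_
        rw [ofReal_integral_eq_lintegral_ofReal hφY_int (.of_forall fun ω => hφ0 _),
          ofReal_measureReal (measure_ne_top _ _)]
    _ ≤ μ Set.univ + ofReal (Real.exp t - 1 - t) * μ Set.univ := by gcongr
    _ = ofReal (Real.exp t - t) * μ Set.univ := by
        rw [show Real.exp t - t = 1 + (Real.exp t - 1 - t) by ring,
          ENNReal.ofReal_add zero_le_one (hφ0 t), ENNReal.ofReal_one, add_mul, one_mul]

theorem measure_ge_le_exp_mul_lintegral_exp {S : Ω → ℝ} (hS : AEMeasurable S μ) (a : ℝ)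
    {l : ℝ} (hl : 0 ≤ l) :
    μ {ω | a ≤ S ω} ≤ ofReal (Real.exp (-(l * a))) * ∫⁻ ω, ofReal (Real.exp (l * S ω)) ∂μ := by
  have hmarkov := mul_meas_ge_le_lintegral₀ (μ := μ)
    (by fun_prop : AEMeasurable (fun ω => ofReal (Real.exp (l * S ω))) μ)
    (ofReal (Real.exp (l * a)))
  have hsub : {ω | a ≤ S ω} ⊆ {ω | ofReal (Real.exp (l * a)) ≤ ofReal (Real.exp (l * S ω))} :=
    fun ω hω => ENNReal.ofReal_le_ofReal (Real.exp_le_exp.2 (mul_le_mul_of_nonneg_left hω hl))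
  calc μ {ω | a ≤ S ω}
      = ofReal (Real.exp (-(l * a))) * (ofReal (Real.exp (l * a)) * μ {ω | a ≤ S ω}) := by
        rw [← mul_assoc, ← ENNReal.ofReal_mul (Real.exp_pos _).le, ← Real.exp_add,
          neg_add_cancel, Real.exp_zero, ENNReal.ofReal_one, one_mul]
    _ ≤ _ := by gcongr; exact (mul_le_mul' le_rfl (measure_mono hsub)).trans hmarkov

end

section

variable {Ω : Type*}

theorem setLIntegral_ofReal_le_of_condExp_le {m m0 : MeasurableSpace Ω} (hm : m ≤ m0)
    {μ : Measure Ω} [IsFiniteMeasure μ] {h : Ω → ℝ} (hh : Integrable h μ) (hh0 : 0 ≤ᵐ[μ] h)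
    {C : ℝ} (hC : ∀ᵐ ω ∂μ, μ[h|m] ω ≤ C) {s : Set Ω} (hs : MeasurableSet[m] s) :
    ∫⁻ ω in s, ofReal (h ω) ∂μ ≤ ofReal C * μ s := by
  rw [← ofReal_integral_eq_lintegral_ofReal hh.integrableOn (ae_restrict_of_ae hh0),
    ← setIntegral_condExp hm hh hs]
  calc ofReal (∫ ω in s, μ[h|m] ω ∂μ) ≤ ofReal (∫ _ in s, C ∂μ) :=
        ENNReal.ofReal_le_ofReal (integral_mono_ae integrable_condExp.integrableOn
          (integrableOn_const (measure_ne_top _ _)) (ae_restrict_of_ae hC))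
    _ = ofReal C * μ s := by
        rw [setIntegral_const, smul_eq_mul, ENNReal.ofReal_mul measureReal_nonneg,
          ofReal_measureReal (measure_ne_top _ _), mul_comm]

theorem setLIntegral_pow_le_of_condExp_rpow_le {m m0 : MeasurableSpace Ω} (hm : m ≤ m0)
    {μ : Measure Ω} [IsFiniteMeasure μ] {K : Ω → ℝ} (hK0 : ∀ᵐ ω ∂μ, 0 ≤ K ω) {k : ℕ}
    (hk : k ≠ 0) (hKk : Integrable (fun ω => K ω ^ k) μ) {κ : ℝ} (hκ : 0 ≤ κ)
    (hmom : ∀ᵐ ω ∂μ, (μ[fun ω' => K ω' ^ k | m] ω) ^ ((1 : ℝ) / k) ≤ κ)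
    {s : Set Ω} (hs : MeasurableSet[m] s) :
    ∫⁻ ω in s, ofReal (K ω ^ k) ∂μ ≤ ofReal (κ ^ k) * μ s := by
  have hKk0 : 0 ≤ᵐ[μ] fun ω => K ω ^ k := hK0.mono fun ω h => pow_nonneg h k
  refine setLIntegral_ofReal_le_of_condExp_le hm hKk hKk0 ?_ hs
  filter_upwards [hmom, condExp_nonneg (m := m) hKk0] with ω h h0
  rwa [one_div, Real.rpow_inv_le_iff_of_pos h0 hκ (by positivity), Real.rpow_natCast] at h

theorem lintegral_mul_le_of_forall_setLIntegral_le {m m0 : MeasurableSpace Ω} (hm : m ≤ m0)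
    (μ : Measure Ω) {H : Ω → ℝ≥0∞} (hH : Measurable H) {C : ℝ≥0∞}
    (hHC : ∀ s, MeasurableSet[m] s → ∫⁻ ω in s, H ω ∂μ ≤ C * μ s)
    {f : Ω → ℝ≥0∞} (hf : Measurable[m] f) :
    ∫⁻ ω, f ω * H ω ∂μ ≤ C * ∫⁻ ω, f ω ∂μ := by
  have hle : (μ.withDensity H).trim hm ≤ C • μ.trim hm := by
    refine Measure.le_iff.2 fun s hs => ?_
    rw [Measure.smul_apply, trim_measurableSet_eq hm hs, trim_measurableSet_eq hm hs,
      withDensity_apply _ (hm s hs), smul_eq_mul]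
    exact hHC s hs
  calc ∫⁻ ω, f ω * H ω ∂μ = ∫⁻ ω, f ω ∂((μ.withDensity H).trim hm) := by
        rw [lintegral_trim hm hf, lintegral_withDensity_eq_lintegral_mul μ hH (hf.mono hm le_rfl)]
        simp only [Pi.mul_apply, mul_comm]
    _ ≤ ∫⁻ ω, f ω ∂(C • μ.trim hm) := lintegral_mono' hle le_rfl
    _ = C * ∫⁻ ω, f ω ∂μ := by rw [lintegral_smul_measure, lintegral_trim hm hf, smul_eq_mul]

theorem lintegral_prod_Icc_le_pow {m0 : MeasurableSpace Ω} {𝓕 : Filtration ℕ m0}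
    {μ : Measure Ω} [IsProbabilityMeasure μ] {E : ℕ → Ω → ℝ≥0∞}
    (hE : ∀ j, 1 ≤ j → Measurable[𝓕 j] (E j)) {C : ℝ≥0∞}
    (hEC : ∀ j, 1 ≤ j → ∀ s, MeasurableSet[𝓕 (j - 1)] s → ∫⁻ ω in s, E j ω ∂μ ≤ C * μ s)
    (n : ℕ) : ∫⁻ ω, ∏ j ∈ Finset.Icc 1 n, E j ω ∂μ ≤ C ^ n := by
  induction n with
  | zero => simp
  | succ n ih =>
    have hprod : Measurable[𝓕 n] fun ω => ∏ j ∈ Finset.Icc 1 n, E j ω :=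
      Finset.measurable_prod _ fun j hj =>
        (hE j (Finset.mem_Icc.1 hj).1).mono (𝓕.mono (Finset.mem_Icc.1 hj).2) le_rfl
    simp only [Finset.prod_Icc_succ_top (Nat.le_add_left 1 n)]
    calc ∫⁻ ω, (∏ j ∈ Finset.Icc 1 n, E j ω) * E (n + 1) ω ∂μ
        ≤ C * ∫⁻ ω, ∏ j ∈ Finset.Icc 1 n, E j ω ∂μ :=
          lintegral_mul_le_of_forall_setLIntegral_le (𝓕.le n) μ
            ((hE _ (Nat.le_add_left 1 n)).mono (𝓕.le _) le_rfl) (hEC _ (Nat.le_add_left 1 n))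
            hprod
      _ ≤ C ^ (n + 1) := by rw [pow_succ']; gcongr

theorem setLIntegral_exp_mul_sub_condExp_le {m m0 : MeasurableSpace Ω} (hm : m ≤ m0)
    {P : Measure Ω} [IsFiniteMeasure P] {Z K : Ω → ℝ} {Δ κLm κLg l : ℝ} (hΔ : 0 ≤ Δ)
    (hκLm : 0 < κLm) (hκLg : 0 ≤ κLg) (hl : 0 ≤ l) (hZint : Integrable Z P)
    (hK0 : ∀ᵐ ω ∂P, 0 ≤ K ω) (hKint : ∀ k : ℕ, 2 ≤ k → Integrable (fun ω => K ω ^ k) P)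
    (hZbound : ∀ᵐ ω ∂P, |Z ω| ≤ K ω * Δ)
    (hKmom : ∀ k : ℕ, 2 ≤ k → ∀ᵐ ω ∂P, (P[fun ω' => K ω' ^ k | m] ω) ^ ((1 : ℝ) / k) ≤ κLm)
    (hmu : ∀ᵐ ω ∂P, |P[Z|m] ω| ≤ κLg * Δ) {s : Set Ω} (hs : MeasurableSet[m] s) :
    ∫⁻ ω in s, ofReal (Real.exp (l * (Z ω - P[Z|m] ω))) ∂P
      ≤ ofReal (Real.exp (l * ((κLm + κLg) * Δ)) - l * ((κLm + κLg) * Δ)) * P s := by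
  have hK : AEMeasurable K P := by
    refine (hKint 2 le_rfl).aemeasurable.sqrt.congr ?_
    filter_upwards [hK0] with ω hω using Real.sqrt_sq hω
  have hX_int : Integrable (fun ω => l * (Z ω - P[Z|m] ω)) P :=
    (hZint.sub integrable_condExp).const_mul l
  have hX0 : ∫ ω in s, l * (Z ω - P[Z|m] ω) ∂P = 0 := by
    rw [integral_const_mul, integral_sub hZint.integrableOn integrable_condExp.integrableOn,
      setIntegral_condExp hm hZint hs, sub_self, mul_zero]
  have hXY : ∀ᵐ ω ∂P, |l * (Z ω - P[Z|m] ω)| ≤ l * Δ * (K ω + κLg) := by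
    filter_upwards [hZbound, hmu] with ω hZ hμ
    rw [abs_mul, abs_of_nonneg hl, mul_assoc]
    gcongr
    linarith [abs_sub (Z ω) (P[Z|m] ω)]
  have hmom : ∀ n : ℕ, ∫⁻ ω in s, ofReal ((l * Δ * (K ω + κLg)) ^ (n + 2)) ∂P
      ≤ ofReal ((l * ((κLm + κLg) * Δ)) ^ (n + 2)) * P.restrict s Set.univ := by
    intro n
    have hKs := setLIntegral_pow_le_of_condExp_rpow_le hm hK0 (k := n + 2) (by omega)
      (hKint _ (by omega)) hκLm.le (hKmom _ (by omega)) hs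
    rw [← Measure.restrict_apply_univ] at hKs
    calc ∫⁻ ω in s, ofReal ((l * Δ * (K ω + κLg)) ^ (n + 2)) ∂P
        = ofReal ((l * Δ) ^ (n + 2)) * ∫⁻ ω in s, ofReal ((K ω + κLg) ^ (n + 2)) ∂P := by
          simp_rw [mul_pow (l * Δ), ENNReal.ofReal_mul (by positivity : 0 ≤ (l * Δ) ^ (n + 2))]
          exact lintegral_const_mul' _ _ ENNReal.ofReal_ne_top
      _ ≤ ofReal ((l * Δ) ^ (n + 2)) *
            (ofReal ((κLm + κLg) ^ (n + 2)) * P.restrict s Set.univ) := by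
          gcongr
          exact lintegral_add_const_pow_le (ae_restrict_of_ae hK0) hκLm hκLg hKs
      _ = ofReal ((l * ((κLm + κLg) * Δ)) ^ (n + 2)) * P.restrict s Set.univ := by
          rw [← mul_assoc, ← ENNReal.ofReal_mul (by positivity), ← mul_pow]
          ring_nf
  simpa using lintegral_exp_le_of_abs_le hX_int.integrableOn hX0
    ((hK.add_const κLg).const_mul (l * Δ)).restrict (ae_restrict_of_ae hXY) (by positivity) hmom

end

theorem stmt_6_general
    {Ω : Type*} {m0 : MeasurableSpace Ω} (P : Measure Ω) [IsProbabilityMeasure P]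
    (𝓕 : Filtration ℕ m0)
    (Δ κLm κLg : ℝ) (hΔ : 0 < Δ) (hκLm : 0 < κLm) (hκLg : 0 < κLg)
    (Z K : ℕ → Ω → ℝ)
    (hZadapted : ∀ j, 1 ≤ j → StronglyMeasurable[𝓕 j] (Z j))
    (hZint : ∀ j, 1 ≤ j → Integrable (Z j) P)
    (hK0 : ∀ j, 1 ≤ j → ∀ᵐ ω ∂P, 0 ≤ K j ω)
    (hKint : ∀ j, 1 ≤ j → ∀ m : ℕ, 2 ≤ m → Integrable (fun ω => K j ω ^ m) P)
    (hZbound : ∀ j, 1 ≤ j → ∀ᵐ ω ∂P, |Z j ω| ≤ K j ω * Δ)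
    (hKmom : ∀ j, 1 ≤ j → ∀ m : ℕ, 2 ≤ m →
      ∀ᵐ ω ∂P, ((P[fun ω' => K j ω' ^ m | 𝓕 (j - 1)]) ω) ^ ((1 : ℝ) / m) ≤ κLm)
    (hmu : ∀ j, 1 ≤ j → ∀ᵐ ω ∂P, |(P[Z j | 𝓕 (j - 1)]) ω| ≤ κLg * Δ) :
    ∀ c : ℝ, 0 < c → ∀ n : ℕ,
      P {ω | (n : ℝ) * c ≤ ∑ j ∈ Finset.Icc 1 n, (Z j ω - (P[Z j | 𝓕 (j - 1)]) ω)}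
        ≤ ENNReal.ofReal (Real.exp (-((n : ℝ) * c ^ 2
            / (2 * (Δ * (κLg + κLm) * c + Δ ^ 2 * (κLg + κLm) ^ 2))))) := by
  intro c hc n
  set B := (κLm + κLg) * Δ
  set l := c / (B * c + B ^ 2)
  set D : ℕ → Ω → ℝ := fun j ω => Z j ω - P[Z j | 𝓕 (j - 1)] ω
  have hl : 0 < l := by positivity
  have hD : ∀ j, 1 ≤ j → StronglyMeasurable[𝓕 j] (D j) := fun j hj =>
    (hZadapted j hj).sub (stronglyMeasurable_condExp.mono (𝓕.mono (Nat.sub_le j 1)))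
  have hmgf := lintegral_prod_Icc_le_pow (μ := P) (E := fun j ω => ofReal (Real.exp (l * D j ω)))
    (fun j hj => ((hD j hj).measurable.const_mul l).exp.ennreal_ofReal)
    (fun j hj s hs => setLIntegral_exp_mul_sub_condExp_le (𝓕.le _) hΔ.le hκLm hκLg.le hl.le
      (hZint j hj) (hK0 j hj) (hKint j hj) (hZbound j hj) (hKmom j hj) (hmu j hj) hs) n
  have hS : AEMeasurable (fun ω => ∑ j ∈ Finset.Icc 1 n, D j ω) P :=
    (Finset.measurable_sum _ fun j hj =>
      ((hD j (Finset.mem_Icc.1 hj).1).mono (𝓕.le j)).measurable).aemeasurable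
  calc P {ω | (n : ℝ) * c ≤ ∑ j ∈ Finset.Icc 1 n, D j ω}
      ≤ ofReal (Real.exp (-(l * (n * c)))) *
          ∫⁻ ω, ∏ j ∈ Finset.Icc 1 n, ofReal (Real.exp (l * D j ω)) ∂P := by
        refine (measure_ge_le_exp_mul_lintegral_exp hS _ hl.le).trans_eq ?_
        simp_rw [Finset.mul_sum, Real.exp_sum,
          ENNReal.ofReal_prod_of_nonneg fun j _ => (Real.exp_pos _).le]
    _ ≤ ofReal (Real.exp (-(l * (n * c))) * (Real.exp (l * B) - l * B) ^ n) := by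
        rw [ENNReal.ofReal_mul (Real.exp_pos _).le, ENNReal.ofReal_pow]
        · exact mul_le_mul' le_rfl hmgf
        · linarith [Real.add_one_le_exp (l * B)]
    _ ≤ _ := by
        rw [show Δ * (κLg + κLm) * c + Δ ^ 2 * (κLg + κLm) ^ 2 = B * c + B ^ 2 by ring]
        exact ENNReal.ofReal_le_ofReal (exp_neg_mul_mul_exp_sub_pow_le (by positivity) hc n)

/-- **CRN Bernstein bound under pathwise Lipschitz sample paths.**
If `|Z j| ≤ K j · Δ` with `(E[K j^m | F_{j−1}])^{1/m} ≤ κ_{Lm}` for every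
`m ≥ 2`, and the conditional mean `μ j = E[Z j | F_{j−1}]` satisfies
`|μ j| ≤ κ_{Lg} Δ`, then with `D j = Z j − μ j`,
`P(∑_{j=1}^n D j ≥ n c) ≤ exp(−n c² / (2 (Δ b_C c + Δ² σ_C²)))`
where `b_C = σ_C = κ_{Lg} + κ_{Lm}`. -/
theorem stmt_6
    {Ω : Type*} {m0 : MeasurableSpace Ω} (P : Measure Ω) [IsProbabilityMeasure P]
    (𝓕 : Filtration ℕ m0) (h0 : 𝓕 0 = ⊥)
    (Δ κLm κLg : ℝ) (hΔ : 0 < Δ) (hκLm : 0 < κLm) (hκLg : 0 < κLg)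
    (Z K : ℕ → Ω → ℝ)
    (hZadapted : ∀ j, 1 ≤ j → StronglyMeasurable[𝓕 j] (Z j))
    (hZint : ∀ j, 1 ≤ j → Integrable (Z j) P)
    (hK0 : ∀ j, 1 ≤ j → ∀ᵐ ω ∂P, 0 ≤ K j ω)
    (hKint : ∀ j, 1 ≤ j → ∀ m : ℕ, 2 ≤ m → Integrable (fun ω => K j ω ^ m) P)
    (hZbound : ∀ j, 1 ≤ j → ∀ᵐ ω ∂P, |Z j ω| ≤ K j ω * Δ)
    (hKmom : ∀ j, 1 ≤ j → ∀ m : ℕ, 2 ≤ m →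
      ∀ᵐ ω ∂P, ((P[fun ω' => K j ω' ^ m | 𝓕 (j - 1)]) ω) ^ ((1 : ℝ) / m) ≤ κLm)
    (hmu : ∀ j, 1 ≤ j → ∀ᵐ ω ∂P, |(P[Z j | 𝓕 (j - 1)]) ω| ≤ κLg * Δ) :
    ∀ c : ℝ, 0 < c → ∀ n : ℕ,
      P {ω | (n : ℝ) * c ≤ ∑ j ∈ Finset.Icc 1 n, (Z j ω - (P[Z j | 𝓕 (j - 1)]) ω)}
        ≤ ENNReal.ofReal (Real.exp (-((n : ℝ) * c ^ 2
            / (2 * (Δ * (κLg + κLm) * c + Δ ^ 2 * (κLg + κLm) ^ 2))))) :=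
  stmt_6_general P 𝓕 Δ κLm κLg hΔ hκLm hκLg Z K hZadapted hZint hK0 hKint hZbound hKmom hmu
end

section
/- Let (Ω, F, P) be a probability space with a filtration F_0 ⊆ F_1 ⊆ … where F_0 is trivial, let d ≥ 1, and let (V_j)_{j≥1} be ℝ^d-valued random vectors such that V_j is F_j-measurable and, for each coordinate r ∈ {1, …, d}, E[ [V_j]_r | F_{j−1} ] = 0 almost surely and E[ |[V_j]_r|^m | F_{j−1} ] ≤ (m!/2)·b^{m−2}·σ² almost surely for every integer m ≥ 2, with constants b > 0 and σ² > 0. Then for every c > 0 and every n ∈ ℕ, P( ‖ (1/n)·Σ_{j=1}^n V_j ‖ > c ) ≤ 2d · exp( − n·c² / (2(d·b·c + d²·σ²)) ), where ‖·‖ is the Euclidean norm on ℝ^d. -/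
open MeasureTheory ProbabilityTheory Real Finset
open scoped ENNReal Nat

/-!
Fix a coordinate `r`. Writing `exp y ≤ 1 + y + ∑_{k ≥ 2} |y|^k / k!` and bounding each
`E[Y |t X_j|^k]`, for `Y ≥ 0` measurable w.r.t. `F_{j-1}`, by `k!/2 · b^(k-2) σ² · E[Y]` through the
conditional moment condition gives `E[Y exp(t X_j)] ≤ (1 + κ(t)) E[Y]` with
`κ(t) = t²σ²/(2(1 - |t| b))`, the linear term vanishing because `E[X_j | F_{j-1}] = 0`. Taking
`Y = exp(t S_{j-1})` and inducting, `E[exp(t S_n)] ≤ exp(n κ(t))`, and the Chernoff bound at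
`t = u/(σ² + b u)` yields `P(|S_n| > n u) ≤ 2 exp(-n u²/(2(σ² + b u)))`. Finally `‖v‖ > c` forces
`|v_r| > c/d` for some `r`, so a union bound over the `d` coordinates at `u = c/d` finishes.
-/

namespace Real

theorem hasSum_abs_pow_add_two_div_factorial (y : ℝ) :
    HasSum (fun k : ℕ => |y| ^ (k + 2) / (k + 2)!) (exp |y| - 1 - |y|) := by
  have := NormedSpace.expSeries_div_hasSum_exp |y|
  rw [← exp_eq_exp_ℝ] at this
  simpa [sum_range_succ, sub_sub] using (hasSum_nat_add_iff' 2).2 this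

theorem exp_le_exp_abs_add_sub_abs (y : ℝ) : exp y ≤ exp |y| + y - |y| := by
  rcases le_or_gt 0 y with h | h
  · rw [abs_of_nonneg h]; linarith
  · rw [abs_of_neg h]
    linarith [sinh_le_self_iff.2 h.le, sinh_eq y]

end Real

theorem EuclideanSpace.norm_le_sum_abs {ι : Type*} [Fintype ι] (v : EuclideanSpace ℝ ι) :
    ‖v‖ ≤ ∑ i, |v i| := by
  conv_lhs => rw [← (EuclideanSpace.basisFun ι ℝ).sum_repr v]
  refine (norm_sum_le _ _).trans ?_
  simp [norm_smul]

theorem EuclideanSpace.exists_lt_abs_apply_of_lt_norm {ι : Type*} [Fintype ι]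
    {v : EuclideanSpace ℝ ι} {c : ℝ} (hc : 0 ≤ c) (h : c < ‖v‖) :
    ∃ i, c / Fintype.card ι < |v i| := by
  by_contra! hle
  have hsum : ∑ i, |v i| ≤ c := by
    refine (sum_le_sum fun i _ => hle i).trans ?_
    rw [sum_const, card_univ, nsmul_eq_mul]
    rcases (Fintype.card ι).eq_zero_or_pos with h0 | hpos
    · simp [h0, hc]
    · rw [mul_div_cancel₀ _ (by positivity)]
  linarith [v.norm_le_sum_abs]

section Conditional

variable {Ω : Type*} {m m0 : MeasurableSpace Ω} {P : Measure[m0] Ω}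

theorem lintegral_mul_le_of_condExp_le_of_bound [IsFiniteMeasure P] (hm : m ≤ m0)
    {Y Z : Ω → ℝ} {B C : ℝ} (hY : StronglyMeasurable[m] Y) (hY0 : 0 ≤ Y)
    (hYB : ∀ ω, Y ω ≤ B) (hZ : Integrable Z P) (hZ0 : 0 ≤ Z) (hC : ∀ᵐ ω ∂P, P[Z | m] ω ≤ C) :
    ∫⁻ ω, ENNReal.ofReal (Y ω * Z ω) ∂P
      ≤ ENNReal.ofReal C * ∫⁻ ω, ENNReal.ofReal (Y ω) ∂P := by
  have hYm : AEStronglyMeasurable Y P := (hY.mono hm).aestronglyMeasurable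
  have hYB' : ∀ᵐ ω ∂P, ‖Y ω‖ ≤ B := ae_of_all _ fun ω => by
    rw [Real.norm_of_nonneg (hY0 ω)]; exact hYB ω
  have hYint : Integrable Y P := (integrable_const B).mono' hYm hYB'
  have hYZ : Integrable (Y * Z) P := hZ.bdd_mul hYm hYB'
  have hpull : ∫ ω, Y ω * Z ω ∂P = ∫ ω, Y ω * P[Z | m] ω ∂P := by
    rw [← integral_condExp hm]
    exact integral_congr_ae (condExp_mul_of_stronglyMeasurable_left hY hYZ hZ)
  calc ∫⁻ ω, ENNReal.ofReal (Y ω * Z ω) ∂P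
      = ENNReal.ofReal (∫ ω, Y ω * P[Z | m] ω ∂P) := by
        rw [← hpull]
        exact (ofReal_integral_eq_lintegral_ofReal hYZ
          (ae_of_all _ fun ω => mul_nonneg (hY0 ω) (hZ0 ω))).symm
    _ ≤ ENNReal.ofReal (∫ ω, Y ω * C ∂P) := by
        refine ENNReal.ofReal_le_ofReal (integral_mono_ae ?_ (hYint.mul_const C) ?_)
        · exact integrable_condExp.bdd_mul hYm hYB'
        · filter_upwards [hC] with ω hω
          exact mul_le_mul_of_nonneg_left hω (hY0 ω)
    _ = ENNReal.ofReal C * ∫⁻ ω, ENNReal.ofReal (Y ω) ∂P := by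
        rw [integral_mul_const, mul_comm, ENNReal.ofReal_mul' (integral_nonneg hY0),
          ofReal_integral_eq_lintegral_ofReal hYint (ae_of_all _ hY0)]

theorem lintegral_mul_le_of_condExp_le [IsFiniteMeasure P] (hm : m ≤ m0) {Y Z : Ω → ℝ}
    {C : ℝ} (hY : StronglyMeasurable[m] Y) (hY0 : 0 ≤ Y) (hZ : Integrable Z P) (hZ0 : 0 ≤ Z)
    (hC : ∀ᵐ ω ∂P, P[Z | m] ω ≤ C) :
    ∫⁻ ω, ENNReal.ofReal (Y ω * Z ω) ∂P
      ≤ ENNReal.ofReal C * ∫⁻ ω, ENNReal.ofReal (Y ω) ∂P := by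
  let YN : ℕ → Ω → ℝ := fun N ω => min (Y ω) N
  have hYN : ∀ N, StronglyMeasurable[m] (YN N) := fun N =>
    (hY.measurable.min measurable_const).stronglyMeasurable
  have hsup : ∀ ω, ENNReal.ofReal (Y ω * Z ω) = ⨆ N, ENNReal.ofReal (YN N ω * Z ω) := by
    intro ω
    refine le_antisymm ?_ (iSup_le fun N => ?_)
    · refine le_iSup_of_le ⌈Y ω⌉₊ (le_of_eq ?_)
      simp only [YN, min_eq_left (Nat.le_ceil (Y ω))]
    · exact ENNReal.ofReal_le_ofReal (mul_le_mul_of_nonneg_right (min_le_left _ _) (hZ0 ω))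
  have hmono : ∀ ω, Monotone fun N => ENNReal.ofReal (YN N ω * Z ω) := fun ω N N' hNN' =>
    ENNReal.ofReal_le_ofReal <| mul_le_mul_of_nonneg_right
      (min_le_min_left _ (Nat.cast_le.2 hNN')) (hZ0 ω)
  rw [lintegral_congr hsup, lintegral_iSup' (fun N => ?_) (ae_of_all _ hmono)]
  · refine iSup_le fun N => (lintegral_mul_le_of_condExp_le_of_bound hm (hYN N)
      (fun ω => le_min (hY0 ω) N.cast_nonneg) (fun ω => min_le_right _ _) hZ hZ0 hC).trans ?_
    gcongr with ω
    exact min_le_left _ _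
  · exact ((((hYN N).mono hm).aestronglyMeasurable.mul hZ.1).aemeasurable).ennreal_ofReal

structure HasCondBernsteinMoments (m : MeasurableSpace Ω) (P : Measure[m0] Ω) (X : Ω → ℝ)
    (b σ2 : ℝ) : Prop where
  integrable : Integrable X P
  condExp_eq_zero : P[X | m] =ᵐ[P] 0
  integrable_abs_pow : ∀ k, 2 ≤ k → Integrable (fun ω => |X ω| ^ k) P
  condExp_abs_pow_le : ∀ k, 2 ≤ k →
    ∀ᵐ ω ∂P, P[fun ω' => |X ω'| ^ k | m] ω ≤ k ! / 2 * b ^ (k - 2) * σ2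

/-- The geometric series `∑ₖ t² σ2 / 2 * (|t| b)ᵏ` collecting the Bernstein bounds on the Taylor
terms of `exp (t X)`; it is only meaningful for `|t| * b < 1`. -/
noncomputable def bernsteinCgfBound (b σ2 t : ℝ) : ℝ := t ^ 2 * σ2 / (2 * (1 - |t| * b))

theorem bernsteinCgfBound_nonneg {b σ2 t : ℝ} (hσ2 : 0 ≤ σ2) (htb : |t| * b < 1) :
    0 ≤ bernsteinCgfBound b σ2 t :=
  div_nonneg (by positivity) (by linarith)

namespace HasCondBernsteinMoments

variable [IsFiniteMeasure P] {X Y : Ω → ℝ} {b σ2 t : ℝ}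

theorem lintegral_mul_abs_pow_le (hX : HasCondBernsteinMoments m P X b σ2) (hm : m ≤ m0)
    (hY : StronglyMeasurable[m] Y) (hY0 : 0 ≤ Y) {k : ℕ} (hk : 2 ≤ k) :
    ∫⁻ ω, ENNReal.ofReal (Y ω * |X ω| ^ k) ∂P
      ≤ ENNReal.ofReal (k ! / 2 * b ^ (k - 2) * σ2) * ∫⁻ ω, ENNReal.ofReal (Y ω) ∂P :=
  lintegral_mul_le_of_condExp_le hm hY hY0 (hX.integrable_abs_pow k hk)
    (fun ω => by positivity) (hX.condExp_abs_pow_le k hk)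

theorem lintegral_mul_exp_abs_sub_le (hX : HasCondBernsteinMoments m P X b σ2) (hm : m ≤ m0)
    (hY : StronglyMeasurable[m] Y) (hY0 : 0 ≤ Y) (hb : 0 ≤ b) (hσ2 : 0 ≤ σ2)
    (htb : |t| * b < 1) :
    ∫⁻ ω, ENNReal.ofReal (Y ω * (exp |t * X ω| - 1 - |t * X ω|)) ∂P
      ≤ ENNReal.ofReal (bernsteinCgfBound b σ2 t) * ∫⁻ ω, ENNReal.ofReal (Y ω) ∂P := by
  have hXm : AEMeasurable X P := hX.integrable.aemeasurable
  have hYm : AEMeasurable Y P := (hY.mono hm).measurable.aemeasurable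
  have hgeom := hasSum_geometric_of_lt_one (by positivity) htb
  calc ∫⁻ ω, ENNReal.ofReal (Y ω * (exp |t * X ω| - 1 - |t * X ω|)) ∂P
      = ∑' k : ℕ, ∫⁻ ω, ENNReal.ofReal (|t| ^ (k + 2) / (k + 2)!)
          * ENNReal.ofReal (Y ω * |X ω| ^ (k + 2)) ∂P := by
        rw [← lintegral_tsum fun k => by fun_prop]
        refine lintegral_congr fun ω => ?_
        rw [← (hasSum_abs_pow_add_two_div_factorial _).tsum_eq, ← tsum_mul_left,
          ENNReal.ofReal_tsum_of_nonneg (fun k => mul_nonneg (hY0 ω) (by positivity))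
            ((hasSum_abs_pow_add_two_div_factorial _).summable.mul_left _)]
        congr 1 with k
        rw [← ENNReal.ofReal_mul (by positivity), abs_mul, mul_pow]
        ring_nf
    _ ≤ ∑' k : ℕ, ENNReal.ofReal (|t| ^ (k + 2) / (k + 2)!)
          * (ENNReal.ofReal ((k + 2)! / 2 * b ^ k * σ2)
            * ∫⁻ ω, ENNReal.ofReal (Y ω) ∂P) := by
        gcongr with k
        rw [lintegral_const_mul' _ _ ENNReal.ofReal_ne_top]
        gcongr
        simpa using hX.lintegral_mul_abs_pow_le hm hY hY0 (k := k + 2) (by omega)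
    _ = ∑' k : ℕ, ENNReal.ofReal (t ^ 2 * σ2 / 2 * (|t| * b) ^ k)
          * ∫⁻ ω, ENNReal.ofReal (Y ω) ∂P := by
        congr 1 with k
        rw [← mul_assoc, ← ENNReal.ofReal_mul (by positivity)]
        congr 2
        field_simp
        rw [← sq_abs t]
        ring
    _ = ENNReal.ofReal (bernsteinCgfBound b σ2 t) * ∫⁻ ω, ENNReal.ofReal (Y ω) ∂P := by
        rw [ENNReal.tsum_mul_right, ← ENNReal.ofReal_tsum_of_nonneg (fun k => by positivity)
          (hgeom.summable.mul_left _), tsum_mul_left, hgeom.tsum_eq, bernsteinCgfBound]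
        congr 2
        field_simp

theorem integral_mul_exp_abs_sub_le (hX : HasCondBernsteinMoments m P X b σ2) (hm : m ≤ m0)
    (hY : StronglyMeasurable[m] Y) (hY0 : 0 ≤ Y) (hYint : Integrable Y P) (hb : 0 ≤ b)
    (hσ2 : 0 ≤ σ2) (htb : |t| * b < 1) :
    Integrable (fun ω => Y ω * (exp |t * X ω| - 1 - |t * X ω|)) P ∧
      ∫ ω, Y ω * (exp |t * X ω| - 1 - |t * X ω|) ∂P
        ≤ bernsteinCgfBound b σ2 t * ∫ ω, Y ω ∂P := by
  have hκ := bernsteinCgfBound_nonneg hσ2 htb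
  have hYm : AEStronglyMeasurable Y P := (hY.mono hm).aestronglyMeasurable
  have hXm : AEStronglyMeasurable X P := hX.integrable.1
  have hmeas : AEStronglyMeasurable (fun ω => Y ω * (exp |t * X ω| - 1 - |t * X ω|)) P := by
    fun_prop
  have h0 : 0 ≤ᵐ[P] fun ω => Y ω * (exp |t * X ω| - 1 - |t * X ω|) :=
    ae_of_all _ fun ω => mul_nonneg (hY0 ω) (by linarith [add_one_le_exp |t * X ω|])
  have hlin : ∫⁻ ω, ENNReal.ofReal (Y ω * (exp |t * X ω| - 1 - |t * X ω|)) ∂P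
      ≤ ENNReal.ofReal (bernsteinCgfBound b σ2 t * ∫ ω, Y ω ∂P) := by
    rw [ENNReal.ofReal_mul hκ, ofReal_integral_eq_lintegral_ofReal hYint (ae_of_all _ hY0)]
    exact hX.lintegral_mul_exp_abs_sub_le hm hY hY0 hb hσ2 htb
  refine ⟨(lintegral_ofReal_ne_top_iff_integrable hmeas h0).1
    (ne_top_of_le_ne_top ENNReal.ofReal_ne_top hlin), ?_⟩
  rw [integral_eq_lintegral_of_nonneg_ae h0 hmeas]
  exact ENNReal.toReal_le_of_le_ofReal (mul_nonneg hκ (integral_nonneg hY0)) hlin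

theorem integrable_mul (hX : HasCondBernsteinMoments m P X b σ2) (hm : m ≤ m0)
    (hY : StronglyMeasurable[m] Y) (hY0 : 0 ≤ Y) (hYint : Integrable Y P) :
    Integrable (fun ω => Y ω * X ω) P := by
  have hYX2 : Integrable (fun ω => Y ω * |X ω| ^ 2) P := by
    refine (lintegral_ofReal_ne_top_iff_integrable ?_ (ae_of_all _ fun ω => ?_)).1 ?_
    · exact (hY.mono hm).aestronglyMeasurable.mul (hX.integrable_abs_pow 2 le_rfl).1
    · exact mul_nonneg (hY0 ω) (by positivity)
    · refine ne_top_of_le_ne_top ?_ (hX.lintegral_mul_abs_pow_le hm hY hY0 le_rfl)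
      exact ENNReal.mul_ne_top ENNReal.ofReal_ne_top (hYint.lintegral_lt_top).ne
  refine (hYint.add hYX2).mono' ((hY.mono hm).aestronglyMeasurable.mul hX.integrable.1)
    (ae_of_all _ fun ω => ?_)
  rw [norm_mul, Real.norm_of_nonneg (hY0 ω), Real.norm_eq_abs, Pi.add_apply, ← mul_one_add]
  exact mul_le_mul_of_nonneg_left (by nlinarith [sq_abs (X ω), abs_nonneg (X ω)]) (hY0 ω)

theorem integral_mul_eq_zero (hX : HasCondBernsteinMoments m P X b σ2) (hm : m ≤ m0)
    (hY : StronglyMeasurable[m] Y) (hYX : Integrable (fun ω => Y ω * X ω) P) :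
    ∫ ω, Y ω * X ω ∂P = 0 := by
  rw [← integral_condExp hm]
  refine integral_eq_zero_of_ae ?_
  filter_upwards [condExp_mul_of_stronglyMeasurable_left (g := X) hY hYX hX.integrable,
    hX.condExp_eq_zero] with ω hpull hzero
  change P[Y * X | m] ω = 0
  simpa [hzero] using hpull

theorem integral_mul_exp_le (hX : HasCondBernsteinMoments m P X b σ2) (hm : m ≤ m0)
    (hY : StronglyMeasurable[m] Y) (hY0 : 0 ≤ Y) (hYint : Integrable Y P) (hb : 0 ≤ b)
    (hσ2 : 0 ≤ σ2) (htb : |t| * b < 1) :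
    Integrable (fun ω => Y ω * exp (t * X ω)) P ∧
      ∫ ω, Y ω * exp (t * X ω) ∂P
        ≤ (1 + bernsteinCgfBound b σ2 t) * ∫ ω, Y ω ∂P := by
  set W : Ω → ℝ := fun ω => exp |t * X ω| - 1 - |t * X ω|
  obtain ⟨hYW, hYWle⟩ := hX.integral_mul_exp_abs_sub_le hm hY hY0 hYint hb hσ2 htb
  have hYX := hX.integrable_mul hm hY hY0 hYint
  have hdom : ∀ ω, Y ω * exp (t * X ω) ≤ Y ω + t * (Y ω * X ω) + Y ω * W ω := by
    intro ω
    have := mul_le_mul_of_nonneg_left (exp_le_exp_abs_add_sub_abs (t * X ω)) (hY0 ω)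
    simp only [W]; linarith
  have hlin : Integrable (fun ω => Y ω + t * (Y ω * X ω)) P := hYint.add (hYX.const_mul t)
  have hint : Integrable (fun ω => Y ω * exp (t * X ω)) P := by
    have hYm : AEStronglyMeasurable Y P := (hY.mono hm).aestronglyMeasurable
    have hXm : AEStronglyMeasurable X P := hX.integrable.1
    refine (hlin.add hYW).mono' (by fun_prop) (ae_of_all _ fun ω => ?_)
    rw [Real.norm_of_nonneg (mul_nonneg (hY0 ω) (exp_nonneg _))]
    exact hdom ω
  refine ⟨hint, ?_⟩
  calc ∫ ω, Y ω * exp (t * X ω) ∂P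
      ≤ ∫ ω, Y ω + t * (Y ω * X ω) + Y ω * W ω ∂P :=
        integral_mono hint (hlin.add hYW) hdom
    _ = ∫ ω, Y ω ∂P + t * ∫ ω, Y ω * X ω ∂P + ∫ ω, Y ω * W ω ∂P := by
        rw [integral_add hlin hYW, integral_add hYint (hYX.const_mul t), integral_const_mul]
    _ ≤ (1 + bernsteinCgfBound b σ2 t) * ∫ ω, Y ω ∂P := by
        rw [hX.integral_mul_eq_zero hm hY hYX]
        linarith

end HasCondBernsteinMoments

section Martingale

variable [IsProbabilityMeasure P] {𝓕 : Filtration ℕ m0} {X : ℕ → Ω → ℝ}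
  {b σ2 t : ℝ}

theorem integral_exp_mul_sum_le (hadapted : ∀ j, 1 ≤ j → StronglyMeasurable[𝓕 j] (X j))
    (hX : ∀ j, 1 ≤ j → HasCondBernsteinMoments (𝓕 (j - 1)) P (X j) b σ2)
    (hb : 0 ≤ b) (hσ2 : 0 ≤ σ2) (htb : |t| * b < 1) (n : ℕ) :
    Integrable (fun ω => exp (t * ∑ j ∈ Icc 1 n, X j ω)) P ∧
      ∫ ω, exp (t * ∑ j ∈ Icc 1 n, X j ω) ∂P ≤ (1 + bernsteinCgfBound b σ2 t) ^ n := by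
  induction n with
  | zero => simp
  | succ n ih =>
    have hS : StronglyMeasurable[𝓕 n] fun ω => exp (t * ∑ j ∈ Icc 1 n, X j ω) := by
      refine Real.continuous_exp.comp_stronglyMeasurable
        ((stronglyMeasurable_fun_sum _ fun j hj => ?_).const_mul t)
      rw [mem_Icc] at hj
      exact (hadapted j hj.1).mono (𝓕.mono hj.2)
    have hstep := (hX (n + 1) le_add_self).integral_mul_exp_le (𝓕.le n) hS
      (fun ω => (exp_pos _).le) ih.1 hb hσ2 htb
    simp only [sum_Icc_succ_top (Nat.le_add_left 1 n), mul_add, exp_add]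
    refine ⟨hstep.1, hstep.2.trans ?_⟩
    rw [pow_succ']
    have := bernsteinCgfBound_nonneg hσ2 htb
    gcongr
    exact ih.2

theorem mgf_sum_le (hadapted : ∀ j, 1 ≤ j → StronglyMeasurable[𝓕 j] (X j))
    (hX : ∀ j, 1 ≤ j → HasCondBernsteinMoments (𝓕 (j - 1)) P (X j) b σ2)
    (hb : 0 ≤ b) (hσ2 : 0 ≤ σ2) (htb : |t| * b < 1) (n : ℕ) :
    Integrable (fun ω => exp (t * ∑ j ∈ Icc 1 n, X j ω)) P ∧
      mgf (fun ω => ∑ j ∈ Icc 1 n, X j ω) P t ≤ exp (n * bernsteinCgfBound b σ2 t) := by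
  obtain ⟨hint, hle⟩ := integral_exp_mul_sum_le hadapted hX hb hσ2 htb n
  refine ⟨hint, hle.trans ?_⟩
  rw [exp_nat_mul]
  gcongr
  · linarith [bernsteinCgfBound_nonneg hσ2 htb]
  · linarith [add_one_le_exp (bernsteinCgfBound b σ2 t)]

theorem measure_lt_abs_sum_le (hadapted : ∀ j, 1 ≤ j → StronglyMeasurable[𝓕 j] (X j))
    (hX : ∀ j, 1 ≤ j → HasCondBernsteinMoments (𝓕 (j - 1)) P (X j) b σ2)
    (hb : 0 ≤ b) (hσ2 : 0 ≤ σ2) (ht : 0 ≤ t) (htb : t * b < 1) (a : ℝ) (n : ℕ) :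
    P {ω | a < |∑ j ∈ Icc 1 n, X j ω|}
      ≤ ENNReal.ofReal (2 * exp (n * bernsteinCgfBound b σ2 t - t * a)) := by
  set S : Ω → ℝ := fun ω => ∑ j ∈ Icc 1 n, X j ω
  have hpos := mgf_sum_le hadapted hX hb hσ2 (t := t) (by rwa [abs_of_nonneg ht]) n
  have hneg := mgf_sum_le hadapted hX hb hσ2 (t := -t) (by rwa [abs_neg, abs_of_nonneg ht]) n
  rw [bernsteinCgfBound, abs_neg, neg_sq, ← bernsteinCgfBound] at hneg
  set κ := bernsteinCgfBound b σ2 t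
  have hupper : P.real {ω | a ≤ S ω} ≤ exp (-t * a) * exp (n * κ) :=
    (measure_ge_le_exp_mul_mgf a ht hpos.1).trans (by gcongr; exact hpos.2)
  have hlower : P.real {ω | S ω ≤ -a} ≤ exp (-t * a) * exp (n * κ) := by
    refine (measure_le_le_exp_mul_mgf (-a) (neg_nonpos.2 ht) hneg.1).trans ?_
    rw [show - -t * -a = -t * a by ring]
    gcongr
    exact hneg.2
  calc P {ω | a < |S ω|}
      ≤ P ({ω | a ≤ S ω} ∪ {ω | S ω ≤ -a}) := by
        refine measure_mono fun ω hω => ?_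
        rcases lt_abs.1 (show a < |S ω| from hω) with h | h
        exacts [Or.inl h.le, Or.inr (show S ω ≤ -a by linarith)]
    _ ≤ P {ω | a ≤ S ω} + P {ω | S ω ≤ -a} := measure_union_le _ _
    _ = ENNReal.ofReal (P.real {ω | a ≤ S ω}) + ENNReal.ofReal (P.real {ω | S ω ≤ -a}) := by
        rw [ofReal_measureReal, ofReal_measureReal]
    _ ≤ ENNReal.ofReal (2 * exp (n * κ - t * a)) := by
        rw [← ENNReal.ofReal_add (by positivity) (by positivity)]
        refine ENNReal.ofReal_le_ofReal ((add_le_add hupper hlower).trans_eq ?_)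
        rw [sub_eq_neg_add, exp_add, neg_mul]
        ring

theorem measure_nat_mul_lt_abs_sum_le
    (hadapted : ∀ j, 1 ≤ j → StronglyMeasurable[𝓕 j] (X j))
    (hX : ∀ j, 1 ≤ j → HasCondBernsteinMoments (𝓕 (j - 1)) P (X j) b σ2)
    (hb : 0 ≤ b) (hσ2 : 0 < σ2) {u : ℝ} (hu : 0 ≤ u) (n : ℕ) :
    P {ω | n * u < |∑ j ∈ Icc 1 n, X j ω|}
      ≤ ENNReal.ofReal (2 * exp (-(n * u ^ 2 / (2 * (σ2 + b * u))))) := by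
  have hden : 0 < σ2 + b * u := by positivity
  have ht : 0 ≤ u / (σ2 + b * u) := by positivity
  have htb : u / (σ2 + b * u) * b < 1 := by
    rw [div_mul_eq_mul_div, div_lt_one hden]; linarith
  convert measure_lt_abs_sum_le hadapted hX hb hσ2.le ht htb (n * u) n using 4
  rw [bernsteinCgfBound, abs_of_nonneg ht]
  field_simp [hσ2.ne']
  ring

end Martingale

end Conditional

theorem stmt_8_general
    {Ω : Type*} {m0 : MeasurableSpace Ω} (P : Measure Ω) [IsProbabilityMeasure P]
    (𝓕 : Filtration ℕ m0)
    (d : ℕ)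
    (V : ℕ → Ω → EuclideanSpace ℝ (Fin d))
    (b σ : ℝ) (hb : 0 < b) (hσ : 0 < σ ^ 2)
    (hadapted : ∀ j, 1 ≤ j → StronglyMeasurable[𝓕 j] (V j))
    (hint : ∀ j, 1 ≤ j → ∀ r : Fin d, Integrable (fun ω => V j ω r) P)
    (hmean : ∀ j, 1 ≤ j → ∀ r : Fin d, P[fun ω => V j ω r | 𝓕 (j - 1)] =ᵐ[P] 0)
    (hintm : ∀ j, 1 ≤ j → ∀ r : Fin d, ∀ m : ℕ, 2 ≤ m →
      Integrable (fun ω => |V j ω r| ^ m) P)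
    (hmom : ∀ j, 1 ≤ j → ∀ r : Fin d, ∀ m : ℕ, 2 ≤ m →
      ∀ᵐ ω ∂P, (P[fun ω' => |V j ω' r| ^ m | 𝓕 (j - 1)]) ω
        ≤ (m.factorial : ℝ) / 2 * b ^ (m - 2) * σ ^ 2) :
    ∀ c : ℝ, 0 < c → ∀ n : ℕ,
      P {ω | c < ‖(n : ℝ)⁻¹ • ∑ j ∈ Finset.Icc 1 n, V j ω‖}
        ≤ ENNReal.ofReal (2 * d * Real.exp (-((n : ℝ) * c ^ 2
            / (2 * (d * b * c + d ^ 2 * σ ^ 2))))) := by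
  intro c hc n
  set E := exp (-(n * c ^ 2 / (2 * (d * b * c + d ^ 2 * σ ^ 2))))
  set A : Fin d → Set Ω := fun r => {ω | n * (c / d) < |∑ j ∈ Icc 1 n, V j ω r|}
  have hcoord : ∀ r, P (A r) ≤ ENNReal.ofReal (2 * E) := by
    intro r
    have hd : (0 : ℝ) < d := by exact_mod_cast r.pos
    convert measure_nat_mul_lt_abs_sum_le (X := fun j ω => V j ω r) (u := c / d)
      (fun j hj => (PiLp.continuous_apply 2 _ r).comp_stronglyMeasurable (hadapted j hj))
      (fun j hj => ⟨hint j hj r, hmean j hj r, hintm j hj r, hmom j hj r⟩) hb.le hσ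
      (by positivity) n using 4
    field_simp
    ring
  have hcover : {ω | c < ‖(n : ℝ)⁻¹ • ∑ j ∈ Icc 1 n, V j ω‖} ⊆ ⋃ r, A r := by
    intro ω hω
    obtain ⟨r, hr⟩ := EuclideanSpace.exists_lt_abs_apply_of_lt_norm hc.le hω
    simp only [PiLp.smul_apply, WithLp.ofLp_sum, Finset.sum_apply, smul_eq_mul, abs_mul,
      abs_inv, Nat.abs_cast, Fintype.card_fin] at hr
    refine Set.mem_iUnion.2 ⟨r, ?_⟩
    rcases n.eq_zero_or_pos with rfl | hn
    · simp only [CharP.cast_eq_zero, inv_zero, zero_mul] at hr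
      exact absurd hr (not_lt.2 (by positivity))
    · exact (lt_inv_mul_iff₀ (by exact_mod_cast hn)).1 hr
  calc P {ω | c < ‖(n : ℝ)⁻¹ • ∑ j ∈ Icc 1 n, V j ω‖}
      ≤ ∑ r, P (A r) := (measure_mono hcover).trans (measure_iUnion_fintype_le _ _)
    _ ≤ ∑ _r : Fin d, ENNReal.ofReal (2 * E) := sum_le_sum fun r _ => hcoord r
    _ = ENNReal.ofReal (2 * d * E) := by
        rw [sum_const, card_univ, Fintype.card_fin, nsmul_eq_mul, ← ENNReal.ofReal_natCast,
          ← ENNReal.ofReal_mul (by positivity)]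
        ring_nf

/-- **Vector Bernstein bound for the norm of a martingale-difference average.**
If each coordinate of the `ℝ^d`-valued sequence `(V j)` is a martingale
difference satisfying the conditional Bernstein moment condition with
parameters `(b, σ²)`, then
`P(‖(1/n) ∑_{j=1}^n V j‖ > c) ≤ 2d exp(−n c²/(2(d b c + d² σ²)))`. -/
theorem stmt_8
    {Ω : Type*} {m0 : MeasurableSpace Ω} (P : Measure Ω) [IsProbabilityMeasure P]
    (𝓕 : Filtration ℕ m0) (h0 : 𝓕 0 = ⊥)
    (d : ℕ) (hd : 1 ≤ d)
    (V : ℕ → Ω → EuclideanSpace ℝ (Fin d))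
    (b σ : ℝ) (hb : 0 < b) (hσ : 0 < σ ^ 2)
    (hadapted : ∀ j, 1 ≤ j → StronglyMeasurable[𝓕 j] (V j))
    (hint : ∀ j, 1 ≤ j → ∀ r : Fin d, Integrable (fun ω => V j ω r) P)
    (hmean : ∀ j, 1 ≤ j → ∀ r : Fin d, P[fun ω => V j ω r | 𝓕 (j - 1)] =ᵐ[P] 0)
    (hintm : ∀ j, 1 ≤ j → ∀ r : Fin d, ∀ m : ℕ, 2 ≤ m →
      Integrable (fun ω => |V j ω r| ^ m) P)
    (hmom : ∀ j, 1 ≤ j → ∀ r : Fin d, ∀ m : ℕ, 2 ≤ m →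
      ∀ᵐ ω ∂P, (P[fun ω' => |V j ω' r| ^ m | 𝓕 (j - 1)]) ω
        ≤ (m.factorial : ℝ) / 2 * b ^ (m - 2) * σ ^ 2) :
    ∀ c : ℝ, 0 < c → ∀ n : ℕ,
      P {ω | c < ‖(n : ℝ)⁻¹ • ∑ j ∈ Finset.Icc 1 n, V j ω‖}
        ≤ ENNReal.ofReal (2 * d * Real.exp (-((n : ℝ) * c ^ 2
            / (2 * (d * b * c + d ^ 2 * σ ^ 2))))) :=
  stmt_8_general P 𝓕 d V b σ hb hσ hadapted hint hmean hintm hmom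
end

section
/- Let γ₁ > 1 > γ₂ > 0 and let (Δ_k)_{k≥0} be a sequence of nonnegative real numbers. Let k₀ = −1 < k₁ < k₂ < … be a strictly increasing infinite sequence of integers, and set Δ_{k₀} := Δ₀/γ₂ by convention. Suppose that for every i ≥ 0 and every integer k with k_i < k ≤ k_{i+1}, Δ_k ≤ γ₁ · γ₂^{k − k_i − 1} · Δ_{k_i}. Then Σ_{k=0}^∞ Δ_k² ≤ ( γ₁² / (γ₂²(1 − γ₂²)) ) · Δ₀² + ( γ₁² / (1 − γ₂²) ) · Σ_{i=1}^∞ Δ_{k_i}². -/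
/-!
The successful iterations cut `ℕ` into the blocks `(k_i, k_{i+1}]`, which cover everything because
`k₀ = -1` and the `k_i` are unbounded. On block `i` the squared radii are dominated by
`γ₁² Δ_{k_i}² (γ₂²)^(k - k_i - 1)`, and since the exponents `k - k_i - 1` are distinct, the whole
block contributes at most `γ₁² Δ_{k_i}² / (1 - γ₂²)`. Summing over the blocks and separating the
block `i = 0`, where `Δ_{k₀} = Δ₀ / γ₂`, gives the bound.
-/

open scoped ENNReal

open Set

theorem StrictMono.apply_zero_add_le {K : ℕ → ℤ} (hK : StrictMono K) (n : ℕ) : K 0 + n ≤ K n := by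
  induction n with
  | zero => simp
  | succ n ih => have := hK (lt_add_one n); push_cast; omega

theorem StrictMono.exists_mem_Ioc_succ {K : ℕ → ℤ} (hK : StrictMono K) {x : ℤ}
    (hx : K 0 < x) :
    ∃ i, x ∈ Ioc (K i) (K (i + 1)) := by
  suffices ∀ n, x ≤ K n → ∃ i, x ∈ Ioc (K i) (K (i + 1)) from
    this (x - K 0).toNat (by have := hK.apply_zero_add_le (x - K 0).toNat; omega)
  intro n hn
  induction n with
  | zero => omega
  | succ n ih =>
    by_cases h : x ≤ K n
    · exact ih h
    · exact ⟨n, not_le.mp h, hn⟩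

theorem ENNReal.tsum_le_of_le_geometric_on_blocks {K : ℕ → ℤ} (hK : StrictMono K)
    (hK0 : K 0 < 0)
    {f a : ℕ → ℝ≥0∞} {q : ℝ≥0∞}
    (hf : ∀ i (k : ℕ), (k : ℤ) ∈ Ioc (K i) (K (i + 1)) → f k ≤ a i * q ^ (k - K i - 1).toNat) :
    ∑' k, f k ≤ (∑' i, a i) * (1 - q)⁻¹ := by
  set B : ℕ → Set ℕ := fun i => {k | (k : ℤ) ∈ Ioc (K i) (K (i + 1))}
  have hcover : ⋃ i, B i = univ :=
    eq_univ_of_forall fun k => mem_iUnion.mpr (hK.exists_mem_Ioc_succ (by omega))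
  have hblock : ∀ i, ∑' k : B i, f k ≤ a i * (1 - q)⁻¹ := by
    intro i
    have hinj : Function.Injective fun k : B i => ((k : ℤ) - K i - 1).toNat := by
      rintro ⟨k, hk⟩ ⟨l, hl⟩ h
      simp only [B, mem_ofPred_eq, mem_Ioc, Subtype.mk.injEq] at hk hl h ⊢
      omega
    calc ∑' k : B i, f k ≤ ∑' k : B i, a i * q ^ ((k : ℤ) - K i - 1).toNat :=
          ENNReal.tsum_le_tsum fun k => hf i k k.2
      _ ≤ ∑' n, a i * q ^ n := ENNReal.tsum_comp_le_tsum_of_injective hinj (fun n => a i * q ^ n)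
      _ = a i * (1 - q)⁻¹ := by rw [ENNReal.tsum_mul_left, ENNReal.tsum_geometric]
  calc ∑' k, f k = ∑' k : ⋃ i, B i, f k := by rw [hcover, tsum_univ]
    _ ≤ ∑' i, ∑' k : B i, f k := ENNReal.tsum_iUnion_le_tsum f B
    _ ≤ ∑' i, a i * (1 - q)⁻¹ := ENNReal.tsum_le_tsum hblock
    _ = (∑' i, a i) * (1 - q)⁻¹ := ENNReal.tsum_mul_right

theorem ENNReal.ofReal_sq_le_of_le_mul_pow {x g r c : ℝ} {e : ℕ} (hx : 0 ≤ x)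
    (h : x ≤ g * r ^ e * c) :
    ENNReal.ofReal (x ^ 2) ≤ ENNReal.ofReal (g ^ 2 * c ^ 2) * ENNReal.ofReal (r ^ 2) ^ e := by
  rw [← ENNReal.ofReal_pow (sq_nonneg r), ← ENNReal.ofReal_mul (by positivity)]
  apply ENNReal.ofReal_le_ofReal
  calc x ^ 2 ≤ (g * r ^ e * c) ^ 2 := pow_le_pow_left₀ hx h 2
    _ = g ^ 2 * c ^ 2 * (r ^ 2) ^ e := by ring

theorem ENNReal.inv_one_sub_ofReal {p : ℝ} (hp0 : 0 ≤ p) (hp1 : p < 1) :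
    (1 - ENNReal.ofReal p)⁻¹ = ENNReal.ofReal (1 - p)⁻¹ := by
  rw [← ENNReal.ofReal_one, ← ENNReal.ofReal_sub _ hp0, ENNReal.ofReal_inv_of_pos (by linarith)]

noncomputable def successfulRadius (γ₂ : ℝ) (Δ : ℕ → ℝ) (K : ℕ → ℤ) : ℕ → ℝ
  | 0 => Δ 0 / γ₂
  | i + 1 => Δ (K (i + 1)).toNat

theorem stmt_9_general
    (γ₁ γ₂ : ℝ) (hγ₂0 : 0 < γ₂) (hγ₂1 : γ₂ < 1)
    (Δ : ℕ → ℝ) (hΔ : ∀ k, 0 ≤ Δ k)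
    (K : ℕ → ℤ) (hK0 : K 0 = -1) (hKmono : StrictMono K)
    (hstep0 : ∀ k : ℤ, -1 < k → k ≤ K 1 →
      Δ k.toNat ≤ γ₁ * γ₂ ^ k.toNat * (Δ 0 / γ₂))
    (hstep : ∀ i : ℕ, 1 ≤ i → ∀ k : ℤ, K i < k → k ≤ K (i + 1) →
      Δ k.toNat ≤ γ₁ * γ₂ ^ (k - K i - 1).toNat * Δ (K i).toNat) :
    ∑' k : ℕ, ENNReal.ofReal (Δ k ^ 2)
      ≤ ENNReal.ofReal (γ₁ ^ 2 / (γ₂ ^ 2 * (1 - γ₂ ^ 2)) * Δ 0 ^ 2)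
        + ENNReal.ofReal (γ₁ ^ 2 / (1 - γ₂ ^ 2))
          * ∑' i : ℕ, ENNReal.ofReal (Δ (K (i + 1)).toNat ^ 2) := by
  have hblocks : ∀ i (k : ℕ), (k : ℤ) ∈ Ioc (K i) (K (i + 1)) →
      ENNReal.ofReal (Δ k ^ 2) ≤ ENNReal.ofReal (γ₁ ^ 2 * successfulRadius γ₂ Δ K i ^ 2)
        * ENNReal.ofReal (γ₂ ^ 2) ^ ((k : ℤ) - K i - 1).toNat := by
    rintro (_ | i) k ⟨hk, hk'⟩
    · refine ENNReal.ofReal_sq_le_of_le_mul_pow (hΔ k) ?_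
      simpa [hK0, successfulRadius] using hstep0 k (by omega) hk'
    · exact ENNReal.ofReal_sq_le_of_le_mul_pow (hΔ k) (hstep (i + 1) (by omega) k hk hk')
  have hγ₂sq : γ₂ ^ 2 < 1 := by nlinarith
  calc ∑' k : ℕ, ENNReal.ofReal (Δ k ^ 2)
      ≤ (∑' i, ENNReal.ofReal (γ₁ ^ 2 * successfulRadius γ₂ Δ K i ^ 2))
          * (1 - ENNReal.ofReal (γ₂ ^ 2))⁻¹ :=
        ENNReal.tsum_le_of_le_geometric_on_blocks hKmono (by omega) hblocks
    _ = _ := by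
      rw [tsum_eq_zero_add' ENNReal.summable, add_mul,
        ENNReal.inv_one_sub_ofReal (by positivity) hγ₂sq,
        ← ENNReal.tsum_mul_right, ← ENNReal.tsum_mul_left, ← ENNReal.ofReal_mul (by positivity)]
      congr 1
      · congr 1
        simp only [successfulRadius, div_eq_mul_inv, mul_inv]
        ring
      · congr 1 with i
        rw [← ENNReal.ofReal_mul (by positivity),
          ← ENNReal.ofReal_mul (div_nonneg (sq_nonneg γ₁) (by linarith))]
        congr 1
        simp only [successfulRadius]
        ring

/-- **Geometric-series bound on the total sum of squared trust-region radii.**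
With expansion constant `γ₁ > 1`, shrinkage constant `γ₂ ∈ (0,1)`, successful
iterations `K 1 < K 2 < …` (and the convention `K 0 = −1`,
`Δ_{K 0} = Δ 0 / γ₂`), if between consecutive successful iterations the radius
satisfies `Δ_k ≤ γ₁ γ₂^{k − K i − 1} Δ_{K i}`, then
`∑_k Δ_k² ≤ γ₁²/(γ₂²(1−γ₂²)) Δ₀² + γ₁²/(1−γ₂²) ∑_{i≥1} Δ_{K i}²`. -/
theorem stmt_9
    (γ₁ γ₂ : ℝ) (hγ₁ : 1 < γ₁) (hγ₂0 : 0 < γ₂) (hγ₂1 : γ₂ < 1)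
    (Δ : ℕ → ℝ) (hΔ : ∀ k, 0 ≤ Δ k)
    (K : ℕ → ℤ) (hK0 : K 0 = -1) (hKmono : StrictMono K)
    (hstep0 : ∀ k : ℤ, -1 < k → k ≤ K 1 →
      Δ k.toNat ≤ γ₁ * γ₂ ^ k.toNat * (Δ 0 / γ₂))
    (hstep : ∀ i : ℕ, 1 ≤ i → ∀ k : ℤ, K i < k → k ≤ K (i + 1) →
      Δ k.toNat ≤ γ₁ * γ₂ ^ (k - K i - 1).toNat * Δ (K i).toNat) :
    ∑' k : ℕ, ENNReal.ofReal (Δ k ^ 2)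
      ≤ ENNReal.ofReal (γ₁ ^ 2 / (γ₂ ^ 2 * (1 - γ₂ ^ 2)) * Δ 0 ^ 2)
        + ENNReal.ofReal (γ₁ ^ 2 / (1 - γ₂ ^ 2))
          * ∑' i : ℕ, ENNReal.ofReal (Δ (K (i + 1)).toNat ^ 2) :=
  stmt_9_general γ₁ γ₂ hγ₂0 hγ₂1 Δ hΔ K hK0 hKmono hstep0 hstep
end

section
/- Let f : ℝ^d → ℝ be continuously differentiable with ∇f Lipschitz of constant κ_{Lg} > 0 (i.e., ‖∇f(x₁) − ∇f(x₂)‖ ≤ κ_{Lg}‖x₁ − x₂‖ for all x₁, x₂). Let x, s ∈ ℝ^d with ‖s‖ ≤ Δ for some Δ > 0, let g ∈ ℝ^d with ‖g − ∇f(x)‖ ≤ κ_{ge}·Δ, and let B be a symmetric linear map on ℝ^d with operator norm ‖B‖ ≤ κ_H. Let F̄⁰ and F̄ˢ be real numbers whose estimation errors satisfy |(F̄⁰ − f(x)) − (F̄ˢ − f(x+s))| ≤ κ_{fde}·Δ², and define the model value Mˢ = F̄⁰ + gᵀs + (1/2)·sᵀBs. Then |Mˢ − F̄ˢ| ≤ (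 κ_{fde} + κ_{ge} + (1/2)(κ_{Lg} + κ_H) ) · Δ². -/
/-!
Write `Mˢ - F̄ˢ` as `(Ē⁰ - Ēˢ) + ⟪g - ∇f(x), s⟫ - (f(x+s) - f(x) - ⟪∇f(x), s⟫) + ½⟪s, Bs⟫`.
The first term is controlled by the balance condition, the second by the gradient error, the
last by `‖B‖`, and the third is the first-order Taylor remainder, which a `κ_{Lg}`-Lipschitz
gradient bounds by `κ_{Lg}‖s‖²/2`: along `t ↦ x + t s` its derivative is at most `κ_{Lg} t ‖s‖²`.
-/

open Set
open scoped RealInnerProductSpace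

section TaylorRemainder

variable {E : Type*} [NormedAddCommGroup E] [InnerProductSpace ℝ E] [CompleteSpace E]
  {f : E → ℝ}

theorem hasDerivAt_comp_add_smul_of_differentiable (hf : Differentiable ℝ f) (x s : E) (t : ℝ) :
    HasDerivAt (fun t : ℝ => f (x + t • s)) ⟪gradient f (x + t • s), s⟫ t := by
  have hline : HasDerivAt (fun t : ℝ => x + t • s) s t := by
    simpa using ((hasDerivAt_id t).smul_const s).const_add x
  have hcomp := (hf (x + t • s)).hasFDerivAt.comp_hasDerivAt t hline
  rwa [(hf (x + t • s)).hasGradientAt.fderiv_apply] at hcomp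

theorem abs_sub_sub_inner_gradient_le {κ : ℝ} (hf : Differentiable ℝ f)
    (hLip : ∀ x₁ x₂ : E, ‖gradient f x₁ - gradient f x₂‖ ≤ κ * ‖x₁ - x₂‖) (x s : E) :
    |f (x + s) - f x - ⟪gradient f x, s⟫| ≤ κ / 2 * ‖s‖ ^ 2 := by
  set remainder : ℝ → ℝ := fun t => f (x + t • s) - f x - t * ⟪gradient f x, s⟫
  have hderiv (t : ℝ) :
      HasDerivAt remainder ⟪gradient f (x + t • s) - gradient f x, s⟫ t := by
    rw [inner_sub_left]
    exact ((hasDerivAt_comp_add_smul_of_differentiable hf x s t).sub_const (f x)).sub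
      (hasDerivAt_mul_const ⟪gradient f x, s⟫)
  have hbarrier (t : ℝ) : HasDerivAt (fun t => κ / 2 * ‖s‖ ^ 2 * t ^ 2) (κ * ‖s‖ ^ 2 * t) t := by
    refine ((hasDerivAt_pow 2 t).const_mul (κ / 2 * ‖s‖ ^ 2)).congr_deriv ?_
    push_cast
    ring
  have hslope : ∀ t ∈ Ico (0 : ℝ) 1,
      ‖⟪gradient f (x + t • s) - gradient f x, s⟫‖ ≤ κ * ‖s‖ ^ 2 * t := by
    intro t ht
    calc ‖⟪gradient f (x + t • s) - gradient f x, s⟫‖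
        ≤ ‖gradient f (x + t • s) - gradient f x‖ * ‖s‖ := norm_inner_le_norm _ _
      _ ≤ κ * ‖x + t • s - x‖ * ‖s‖ := by gcongr; exact hLip _ _
      _ = κ * ‖s‖ ^ 2 * t := by
        rw [add_sub_cancel_left, norm_smul, Real.norm_of_nonneg ht.1]
        ring
  have hbound := image_norm_le_of_norm_deriv_right_le_deriv_boundary
    (fun t _ => (hderiv t).continuousAt.continuousWithinAt)
    (fun t _ => (hderiv t).hasDerivWithinAt) (by simp [remainder]) hbarrier hslope
    (right_mem_Icc.2 zero_le_one)
  simpa [remainder] using hbound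

end TaylorRemainder

theorem abs_inner_apply_self_le {E : Type*} [NormedAddCommGroup E] [InnerProductSpace ℝ E]
    (B : E →L[ℝ] E) (s : E) : |⟪s, B s⟫| ≤ ‖B‖ * ‖s‖ ^ 2 :=
  calc |⟪s, B s⟫| ≤ ‖s‖ * ‖B s‖ := abs_real_inner_le_norm _ _
    _ ≤ ‖s‖ * (‖B‖ * ‖s‖) := by gcongr; exact B.le_opNorm s
    _ = ‖B‖ * ‖s‖ ^ 2 := by ring

theorem stmt_10_general
    (d : ℕ) (f : EuclideanSpace ℝ (Fin d) → ℝ)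
    (κLg : ℝ) (hκLg : 0 < κLg)
    (hf : ContDiff ℝ 1 f)
    (hLip : ∀ x₁ x₂ : EuclideanSpace ℝ (Fin d),
      ‖gradient f x₁ - gradient f x₂‖ ≤ κLg * ‖x₁ - x₂‖)
    (Δ κge κfde κH : ℝ)
    (x s : EuclideanSpace ℝ (Fin d)) (hs : ‖s‖ ≤ Δ)
    (g : EuclideanSpace ℝ (Fin d)) (hg : ‖g - gradient f x‖ ≤ κge * Δ)
    (B : EuclideanSpace ℝ (Fin d) →L[ℝ] EuclideanSpace ℝ (Fin d))
    (hB : ‖B‖ ≤ κH)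
    (F0 Fs : ℝ)
    (herr : |(F0 - f x) - (Fs - f (x + s))| ≤ κfde * Δ ^ 2) :
    |F0 + (inner ℝ g s : ℝ) + (1 / 2 : ℝ) * (inner ℝ s (B s) : ℝ) - Fs|
      ≤ (κfde + κge + (1 / 2) * (κLg + κH)) * Δ ^ 2 := by
  have hs2 : ‖s‖ ^ 2 ≤ Δ ^ 2 := pow_le_pow_left₀ (norm_nonneg s) hs 2
  have htaylor : |f (x + s) - f x - ⟪gradient f x, s⟫| ≤ κLg / 2 * Δ ^ 2 :=
    (abs_sub_sub_inner_gradient_le (hf.differentiable one_ne_zero) hLip x s).trans (by gcongr)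
  have hgrad : |⟪g - gradient f x, s⟫| ≤ κge * Δ * Δ :=
    (abs_real_inner_le_norm _ _).trans
      (mul_le_mul hg hs (norm_nonneg s) ((norm_nonneg _).trans hg))
  have hmodel : |⟪s, B s⟫| ≤ κH * Δ ^ 2 :=
    (abs_inner_apply_self_le B s).trans
      (mul_le_mul hB hs2 (sq_nonneg _) ((norm_nonneg B).trans hB))
  have hsplit : F0 + ⟪g, s⟫ + 1 / 2 * ⟪s, B s⟫ - Fs
      = ((F0 - f x) - (Fs - f (x + s))) + ⟪g - gradient f x, s⟫
        - (f (x + s) - f x - ⟪gradient f x, s⟫) + 1 / 2 * ⟪s, B s⟫ := by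
    rw [inner_sub_left]; ring
  rw [hsplit]
  have hA := abs_le.mp herr
  have hG := abs_le.mp hgrad
  have hT := abs_le.mp htaylor
  have hQ := abs_le.mp hmodel
  exact abs_le.mpr ⟨by linarith, by linarith⟩

/-- **Model prediction error bound in a stochastic trust region.**
With `Mˢ = F̄⁰ + gᵀs + (1/2) sᵀBs`, gradient estimate error `≤ κ_{ge} Δ`,
balance condition `|Ē⁰ − Ēˢ| ≤ κ_{fde} Δ²`, `‖B‖ ≤ κ_H`, `‖s‖ ≤ Δ`, and
`κ_{Lg}`-Lipschitz `∇f`, one has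
`|Mˢ − F̄ˢ| ≤ (κ_{fde} + κ_{ge} + (1/2)(κ_{Lg} + κ_H)) Δ²`. -/
theorem stmt_10
    (d : ℕ) (f : EuclideanSpace ℝ (Fin d) → ℝ)
    (κLg : ℝ) (hκLg : 0 < κLg)
    (hf : ContDiff ℝ 1 f)
    (hLip : ∀ x₁ x₂ : EuclideanSpace ℝ (Fin d),
      ‖gradient f x₁ - gradient f x₂‖ ≤ κLg * ‖x₁ - x₂‖)
    (Δ κge κfde κH : ℝ) (hΔ : 0 < Δ)
    (x s : EuclideanSpace ℝ (Fin d)) (hs : ‖s‖ ≤ Δ)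
    (g : EuclideanSpace ℝ (Fin d)) (hg : ‖g - gradient f x‖ ≤ κge * Δ)
    (B : EuclideanSpace ℝ (Fin d) →L[ℝ] EuclideanSpace ℝ (Fin d))
    (hBsymm : ∀ u v : EuclideanSpace ℝ (Fin d), (inner ℝ (B u) v : ℝ) = inner ℝ u (B v))
    (hB : ‖B‖ ≤ κH)
    (F0 Fs : ℝ)
    (herr : |(F0 - f x) - (Fs - f (x + s))| ≤ κfde * Δ ^ 2) :
    |F0 + (inner ℝ g s : ℝ) + (1 / 2 : ℝ) * (inner ℝ s (B s) : ℝ) - Fs|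
      ≤ (κfde + κge + (1 / 2) * (κLg + κH)) * Δ ^ 2 :=
  stmt_10_general d f κLg hκLg hf hLip Δ κge κfde κH x s hs g hg B hB F0 Fs herr
end

section
/- Let F̄ : ℝ^d → ℝ be differentiable with gradient Ḡ satisfying ‖Ḡ(x₁) − Ḡ(x₂)‖ ≤ κ_{uLG}·‖x₁ − x₂‖ for all x₁, x₂, with κ_{uLG} > 0. Let η ∈ (0,1), κ_{fcd} ∈ (0,1], κ_H > 0, and set κ_{dum} = (1−η)·κ_{fcd} / ( κ_H + κ_{uLG} ). Let x, s ∈ ℝ^d with 0 < ‖s‖ ≤ Δ, let B be symmetric with ‖B‖ ≤ κ_H, and define the model M(x+u) = F̄(x) + Ḡ(x)ᵀu + (1/2)·uᵀBu. Suppose the Cauchy decrease condition M(x) − M(x+s) ≥ (κ_{fcd}/2)·‖Ḡ(x)‖·min( ‖Ḡ(x)‖/κ_H , Δ ) holds, and suppose Δ ≤ κ_{dum}·‖Ḡ(x)‖. Then the success ratio ρ̂ = ( F̄(x+s) − F̄(x) ) / ( M(x+s) − M(x) ) satisfies ρ̂ ≥ η. -/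
/-!
Along the segment from `x` to `x + s` the gradient moves by at most `κ_{uLG} t ‖s‖`, so `F̄`
deviates from its linearization by at most `κ_{uLG} ‖s‖² / 2`, and the model's quadratic term
contributes at most `κ_H ‖s‖² / 2`; hence `|F̄(x+s) − M(x+s)| ≤ (κ_H + κ_{uLG}) Δ² / 2`.
Since `κ_{dum} κ_H ≤ 1`, the radius condition `Δ ≤ κ_{dum} ‖Ḡ(x)‖` makes the Cauchy decrease
`κ_{fcd} ‖Ḡ(x)‖ Δ / 2`, which is at least `(κ_H + κ_{uLG}) Δ² / (2(1 − η))`. So the model error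
is at most a `(1 − η)`-fraction of the predicted decrease, which is exactly `ρ̂ ≥ η`.
-/

open InnerProductSpace Set

section LipschitzGradient

variable {E : Type*} [NormedAddCommGroup E] [InnerProductSpace ℝ E]

theorem abs_sub_sub_inner_le_of_lipschitz_gradient [CompleteSpace E]
    {f : E → ℝ} {g : E → E} {L : ℝ} (hf : ∀ y, HasGradientAt f (g y) y)
    (hg : ∀ y z, ‖g y - g z‖ ≤ L * ‖y - z‖) (x s : E) :
    |f (x + s) - f x - ⟪g x, s⟫_ℝ| ≤ L / 2 * ‖s‖ ^ 2 := by
  set φ : ℝ → ℝ := fun t ↦ f (x + t • s) - f x - t * ⟪g x, s⟫_ℝ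
  set bound : ℝ → ℝ := fun t ↦ L / 2 * ‖s‖ ^ 2 * t ^ 2
  have hφ (t : ℝ) : HasDerivAt φ ⟪g (x + t • s) - g x, s⟫_ℝ t := by
    have hline : HasDerivAt (fun t : ℝ ↦ x + t • s) s t := by
      simpa using ((hasDerivAt_id t).smul_const s).const_add x
    have hcomp := (hf (x + t • s)).hasFDerivAt.comp_hasDerivAt t hline
    rw [inner_sub_left]
    exact (hcomp.sub_const (f x)).sub (hasDerivAt_mul_const _)
  have hbound (t : ℝ) : HasDerivAt bound (L * ‖s‖ ^ 2 * t) t :=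
    ((hasDerivAt_pow 2 t).const_mul (L / 2 * ‖s‖ ^ 2)).congr_deriv (by norm_num; ring)
  have hφ' (t : ℝ) (ht : t ∈ Ico (0 : ℝ) 1) : ‖⟪g (x + t • s) - g x, s⟫_ℝ‖ ≤ L * ‖s‖ ^ 2 * t :=
    calc ‖⟪g (x + t • s) - g x, s⟫_ℝ‖ ≤ ‖g (x + t • s) - g x‖ * ‖s‖ := norm_inner_le_norm _ _
      _ ≤ L * ‖t • s‖ * ‖s‖ := by
          gcongr
          simpa using hg (x + t • s) x
      _ = L * ‖s‖ ^ 2 * t := by rw [norm_smul, Real.norm_of_nonneg ht.1]; ring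
  have key := image_norm_le_of_norm_deriv_right_le_deriv_boundary (a := 0) (b := 1)
    (fun t _ ↦ (hφ t).continuousAt.continuousWithinAt) (fun t _ ↦ (hφ t).hasDerivWithinAt)
    (by simp [φ, bound]) hbound hφ' (right_mem_Icc.2 zero_le_one)
  simpa [φ, bound, Real.norm_eq_abs] using key

theorem abs_inner_apply_self_le_of_opNorm_le {B : E →L[ℝ] E} {κ : ℝ} (hB : ‖B‖ ≤ κ) (s : E) :
    |⟪s, B s⟫_ℝ| ≤ κ * ‖s‖ ^ 2 :=
  calc |⟪s, B s⟫_ℝ| ≤ ‖s‖ * ‖B s‖ := abs_real_inner_le_norm s (B s)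
    _ ≤ ‖s‖ * (κ * ‖s‖) := by gcongr; exact B.le_of_opNorm_le hB s
    _ = κ * ‖s‖ ^ 2 := by ring

theorem abs_sub_quadratic_model_le [CompleteSpace E] {f : E → ℝ} {g : E → E} {L κ : ℝ}
    (hf : ∀ y, HasGradientAt f (g y) y) (hg : ∀ y z, ‖g y - g z‖ ≤ L * ‖y - z‖)
    {B : E →L[ℝ] E} (hB : ‖B‖ ≤ κ) (x s : E) :
    |f (x + s) - (f x + ⟪g x, s⟫_ℝ + 1 / 2 * ⟪s, B s⟫_ℝ)| ≤ (κ + L) / 2 * ‖s‖ ^ 2 := by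
  have hlin := abs_sub_sub_inner_le_of_lipschitz_gradient hf hg x s
  have hquad := abs_inner_apply_self_le_of_opNorm_le hB s
  calc |f (x + s) - (f x + ⟪g x, s⟫_ℝ + 1 / 2 * ⟪s, B s⟫_ℝ)|
      = |(f (x + s) - f x - ⟪g x, s⟫_ℝ) - 1 / 2 * ⟪s, B s⟫_ℝ| := by ring_nf
    _ ≤ |f (x + s) - f x - ⟪g x, s⟫_ℝ| + |1 / 2 * ⟪s, B s⟫_ℝ| := abs_sub _ _
    _ ≤ (κ + L) / 2 * ‖s‖ ^ 2 := by rw [abs_mul, abs_of_pos (one_half_pos (α := ℝ))]; linarith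

end LipschitzGradient

theorem cauchy_decrease_dominates_of_radius_le {η κfcd κH L Δ γ : ℝ}
    (hη : η ∈ Ioo (0 : ℝ) 1) (hκfcd : κfcd ∈ Ioc (0 : ℝ) 1) (hκH : 0 < κH) (hL : 0 ≤ L)
    (hΔ : 0 < Δ) (hΔγ : Δ ≤ (1 - η) * κfcd / (κH + L) * γ) :
    (κH + L) / 2 * Δ ^ 2 ≤ (1 - η) * (κfcd / 2 * γ * min (γ / κH) Δ) := by
  obtain ⟨hη0, hη1⟩ := hη
  obtain ⟨hκfcd0, hκfcd1⟩ := hκfcd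
  have hsum : 0 < κH + L := by linarith
  have hscaled : (κH + L) * Δ ≤ (1 - η) * κfcd * γ :=
    calc (κH + L) * Δ ≤ (κH + L) * ((1 - η) * κfcd / (κH + L) * γ) := by gcongr
      _ = (1 - η) * κfcd * γ := by field_simp
  have hcoef : 0 < (1 - η) * κfcd := mul_pos (by linarith) hκfcd0
  have hγ : 0 < γ := pos_of_mul_pos_right ((mul_pos hsum hΔ).trans_le hscaled) hcoef.le
  have hmin : min (γ / κH) Δ = Δ := by
    refine min_eq_right ((le_div_iff₀ hκH).2 ?_)
    calc Δ * κH ≤ (κH + L) * Δ := by nlinarith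
      _ ≤ (1 - η) * κfcd * γ := hscaled
      _ ≤ 1 * γ := by gcongr; nlinarith
      _ = γ := one_mul γ
  rw [hmin]
  nlinarith

theorem le_sub_div_sub_of_abs_sub_le_mul {f₀ f₁ m₁ η : ℝ}
    (hdec : 0 < f₀ - m₁) (herr : |f₁ - m₁| ≤ (1 - η) * (f₀ - m₁)) :
    η ≤ (f₁ - f₀) / (m₁ - f₀) := by
  rw [le_div_iff_of_neg (by linarith)]
  linarith [le_abs_self (f₁ - m₁)]

theorem stmt_12_general
    (d : ℕ) (Fb : EuclideanSpace ℝ (Fin d) → ℝ)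
    (Gb : EuclideanSpace ℝ (Fin d) → EuclideanSpace ℝ (Fin d))
    (hgrad : ∀ y, HasGradientAt Fb (Gb y) y)
    (κuLG : ℝ) (hκuLG : 0 < κuLG)
    (hLip : ∀ x₁ x₂ : EuclideanSpace ℝ (Fin d),
      ‖Gb x₁ - Gb x₂‖ ≤ κuLG * ‖x₁ - x₂‖)
    (η κfcd κH : ℝ)
    (hη : η ∈ Set.Ioo (0 : ℝ) 1) (hκfcd : κfcd ∈ Set.Ioc (0 : ℝ) 1) (hκH : 0 < κH)
    (κdum : ℝ) (hκdum : κdum = (1 - η) * κfcd / (κH + κuLG))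
    (Δ : ℝ) (x s : EuclideanSpace ℝ (Fin d)) (hs0 : 0 < ‖s‖) (hsΔ : ‖s‖ ≤ Δ)
    (B : EuclideanSpace ℝ (Fin d) →L[ℝ] EuclideanSpace ℝ (Fin d))
    (hB : ‖B‖ ≤ κH)
    (M : EuclideanSpace ℝ (Fin d) → ℝ)
    (hM : ∀ y, M y = Fb x + (inner ℝ (Gb x) (y - x) : ℝ)
      + (1 / 2 : ℝ) * (inner ℝ (y - x) (B (y - x)) : ℝ))
    (hCauchy : M x - M (x + s) ≥ κfcd / 2 * ‖Gb x‖ * min (‖Gb x‖ / κH) Δ)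
    (hΔg : Δ ≤ κdum * ‖Gb x‖) :
    η ≤ (Fb (x + s) - Fb x) / (M (x + s) - M x) := by
  have hΔ : 0 < Δ := hs0.trans_le hsΔ
  have hMx : M x = Fb x := by simp [hM]
  have hMxs : M (x + s) = Fb x + ⟪Gb x, s⟫_ℝ + 1 / 2 * ⟪s, B s⟫_ℝ := by simp [hM]
  have herr : |Fb (x + s) - M (x + s)| ≤ (κH + κuLG) / 2 * Δ ^ 2 := by
    rw [hMxs]
    grw [abs_sub_quadratic_model_le hgrad hLip hB x s, hsΔ]
  have hdom := cauchy_decrease_dominates_of_radius_le hη hκfcd hκH hκuLG.le hΔ (hκdum ▸ hΔg)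
  have hpred : (κH + κuLG) / 2 * Δ ^ 2 ≤ (1 - η) * (M x - M (x + s)) := by
    grw [hdom, hCauchy]
    linarith [hη.2]
  have hdec : 0 < M x - M (x + s) := by
    have herr_pos : 0 < (κH + κuLG) / 2 * Δ ^ 2 := by positivity
    exact pos_of_mul_pos_right (herr_pos.trans_le hpred) (by linarith [hη.2])
  rw [← hMx]
  exact le_sub_div_sub_of_abs_sub_le_mul hdec (herr.trans hpred)

/-- **Success guarantee for small trust regions (first-order, CRN, smooth
sample paths).** If the sample-path estimate `F̄` is differentiable with
`κ_{uLG}`-Lipschitz gradient `Ḡ`, the model is built from `F̄(x)` and `Ḡ(x)`,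
the Cauchy decrease holds, and `Δ ≤ κ_{dum} ‖Ḡ(x)‖` with
`κ_{dum} = (1−η)κ_{fcd}/(κ_H + κ_{uLG})`, then the success ratio
`ρ̂ = (F̄(x+s) − F̄(x))/(M(x+s) − M(x))` is at least `η`. -/
theorem stmt_12
    (d : ℕ) (Fb : EuclideanSpace ℝ (Fin d) → ℝ)
    (Gb : EuclideanSpace ℝ (Fin d) → EuclideanSpace ℝ (Fin d))
    (hgrad : ∀ y, HasGradientAt Fb (Gb y) y)
    (κuLG : ℝ) (hκuLG : 0 < κuLG)
    (hLip : ∀ x₁ x₂ : EuclideanSpace ℝ (Fin d),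
      ‖Gb x₁ - Gb x₂‖ ≤ κuLG * ‖x₁ - x₂‖)
    (η κfcd κH : ℝ)
    (hη : η ∈ Set.Ioo (0 : ℝ) 1) (hκfcd : κfcd ∈ Set.Ioc (0 : ℝ) 1) (hκH : 0 < κH)
    (κdum : ℝ) (hκdum : κdum = (1 - η) * κfcd / (κH + κuLG))
    (Δ : ℝ) (x s : EuclideanSpace ℝ (Fin d)) (hs0 : 0 < ‖s‖) (hsΔ : ‖s‖ ≤ Δ)
    (B : EuclideanSpace ℝ (Fin d) →L[ℝ] EuclideanSpace ℝ (Fin d))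
    (hBsymm : ∀ u v : EuclideanSpace ℝ (Fin d), (inner ℝ (B u) v : ℝ) = inner ℝ u (B v))
    (hB : ‖B‖ ≤ κH)
    (M : EuclideanSpace ℝ (Fin d) → ℝ)
    (hM : ∀ y, M y = Fb x + (inner ℝ (Gb x) (y - x) : ℝ)
      + (1 / 2 : ℝ) * (inner ℝ (y - x) (B (y - x)) : ℝ))
    (hCauchy : M x - M (x + s) ≥ κfcd / 2 * ‖Gb x‖ * min (‖Gb x‖ / κH) Δ)
    (hΔg : Δ ≤ κdum * ‖Gb x‖) :
    η ≤ (Fb (x + s) - Fb x) / (M (x + s) - M x) :=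
  stmt_12_general d Fb Gb hgrad κuLG hκuLG hLip η κfcd κH hη hκfcd hκH κdum hκdum Δ x s hs0 hsΔ B hB
    M hM hCauchy hΔg
end
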